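/- arXiv:math/9604212 — 8 statements merged into one kernel-verified Lean document; each statement's English description precedes it below -/
import Mathlib

section
/- Let X₀ be a closed linear subspace of the real Banach space X, and let f ∈ L₀(X) lie in the closure of the set of μ-a.e. X₀-valued functions for the topology of scalar convergence in measure; explicitly, suppose that for every ε > 0 and every finite collection x₁*, …, x_N* ∈ X* there exists g ∈ L₀(X) with g(ω) ∈ X₀ for μ-a.e. ω such that μ{ω : |xᵢ*(f(ω) − g(ω))| ≥ ε} < ε for each 1 ≤ i ≤ N. Then f(ω) ∈ X₀ for μ-a.e. ω. In particular, if a sequence (f_n) in L₀(X) with f_n(ω) ∈ X₀ μ-a.e. for every n converges scalarly in measure to f ∈ L₀(X), then f(ω) ∈ X₀ for μ-a.e. ω. -/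
open MeasureTheory Filter Topology ENNReal Set

noncomputable section

/-- Lebesgue measure on `[0,1]`, as a measure on `ℝ`. -/
def μ01 : Measure ℝ := volume.restrict (Set.Icc 0 1)

section Defs
variable {X : Type*} [NormedAddCommGroup X] [NormedSpace ℝ X]

/-- `(f n)` converges to `g` scalarly in measure. -/
def ScalarInMeasure (f : ℕ → ℝ → X) (g : ℝ → X) : Prop :=
  ∀ φ : X →L[ℝ] ℝ,
    TendstoInMeasure μ01 (fun n ω => φ (f n ω)) atTop (fun ω => φ (g ω))

/-- `(f n)` converges to `g` scalarly almost everywhere. -/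
def ScalarAE (f : ℕ → ℝ → X) (g : ℝ → X) : Prop :=
  ∀ φ : X →L[ℝ] ℝ, ∀ᵐ ω ∂μ01,
    Tendsto (fun n => φ (f n ω)) atTop (𝓝 (φ (g ω)))

/-- `(f n)` converges to `g` weakly almost everywhere. -/
def WeaklyAE (f : ℕ → ℝ → X) (g : ℝ → X) : Prop :=
  ∃ A : Set ℝ, MeasurableSet A ∧ μ01 A = 1 ∧
    ∀ ω ∈ A, ∀ φ : X →L[ℝ] ℝ,
      Tendsto (fun n => φ (f n ω)) atTop (𝓝 (φ (g ω)))

/-- `(f n)` converges to `g` scalarly in `L_p`. -/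
def ScalarInLp (p : ℝ≥0∞) (f : ℕ → ℝ → X) (g : ℝ → X) : Prop :=
  ∀ φ : X →L[ℝ] ℝ,
    Tendsto (fun n => eLpNorm (fun ω => φ (f n ω) - φ (g ω)) p μ01) atTop (𝓝 0)

/-- `(f n)` is bounded in `L_p(X)`. -/
def LpBounded (p : ℝ≥0∞) (f : ℕ → ℝ → X) : Prop :=
  ∃ C : ℝ≥0∞, C < ⊤ ∧ ∀ n, eLpNorm (f n) p μ01 ≤ C

/-- `(f n)` is pointwise bounded almost everywhere. -/
def PtwiseBddAE (f : ℕ → ℝ → X) : Prop :=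
  ∀ᵐ ω ∂μ01, BddAbove (Set.range fun n => ‖f n ω‖)

/-- `(f n)` is scalarly Cauchy in measure. -/
def ScalarCauchyInMeasure (f : ℕ → ℝ → X) : Prop :=
  ∀ φ : X →L[ℝ] ℝ, ∀ ε : ℝ, 0 < ε → ∃ N : ℕ, ∀ n ≥ N, ∀ m ≥ N,
    μ01 {ω | ε ≤ |φ (f n ω) - φ (f m ω)|} < ENNReal.ofReal ε

/-- The `q`-Pettis norm of a function (possibly infinite). -/
def pettisNorm (q : ℝ≥0∞) (f : ℝ → X) : ℝ≥0∞ :=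
  ⨆ (φ : X →L[ℝ] ℝ) (_ : ‖φ‖ ≤ 1), eLpNorm (fun ω => φ (f ω)) q μ01

end Defs

/-- `X` is an Asplund space: every closed separable subspace has separable dual. -/
def AsplundCond (X : Type*) [NormedAddCommGroup X] [NormedSpace ℝ X] : Prop :=
  ∀ Y : Submodule ℝ X, IsClosed (Y : Set X) →
    TopologicalSpace.SeparableSpace Y →
    TopologicalSpace.SeparableSpace (StrongDual ℝ Y)

/-!
A functional that vanishes on `X₀` kills the error `f - g` wherever `g` is `X₀`-valued, so the
approximation hypothesis forces `φ ∘ f = 0` a.e. for every such `φ`. Since `f` is a.e. separably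
valued, countably many of these functionals, chosen by Hahn–Banach to detect the distance to `X₀`
at the points of a countable dense set, suffice to place `f ω` in `closure X₀ = X₀` a.e.
-/

section

variable {α X : Type*} [MeasurableSpace α] {μ : Measure α}
  [NormedAddCommGroup X] [NormedSpace ℝ X]

theorem Submodule.exists_dual_eq_infDist (X₀ : Submodule ℝ X) (x : X) :
    ∃ φ : X →L[ℝ] ℝ, ‖φ‖ ≤ 1 ∧ (∀ y ∈ X₀, φ y = 0) ∧ φ x = Metric.infDist x X₀ := by
  obtain ⟨g, hg, hgx⟩ := exists_dual_vector'' ℝ (X₀.mkQL x)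
  refine ⟨g.comp X₀.mkQL, ?_, fun y hy => ?_, ?_⟩
  · refine ContinuousLinearMap.opNorm_le_bound _ zero_le_one fun y => ?_
    calc ‖g (X₀.mkQL y)‖ ≤ ‖g‖ * ‖X₀.mkQL y‖ := g.le_opNorm _
      _ ≤ 1 * ‖y‖ := by gcongr; exact Submodule.Quotient.norm_mk_le X₀ y
  · simp [(Submodule.Quotient.mk_eq_zero X₀).2 hy]
  · exact hgx.trans (QuotientAddGroup.norm_mk x)

theorem Submodule.ae_mem_of_forall_dual_ae_eq_zero {X₀ : Submodule ℝ X}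
    (hX₀ : IsClosed (X₀ : Set X)) {f : α → X} (hf : AEStronglyMeasurable f μ)
    (h : ∀ φ : X →L[ℝ] ℝ, (∀ y ∈ X₀, φ y = 0) → ∀ᵐ ω ∂μ, φ (f ω) = 0) :
    ∀ᵐ ω ∂μ, f ω ∈ X₀ := by
  obtain ⟨t, ⟨c, hc, htc⟩, hft⟩ := hf.isSeparable_ae_range
  choose φ hφ_norm hφ_ann hφ_eq using X₀.exists_dual_eq_infDist
  have hc_ae : ∀ᵐ ω ∂μ, ∀ d ∈ c, φ d (f ω) = 0 :=
    (ae_ball_iff hc).2 fun d _ => h (φ d) (hφ_ann d)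
  filter_upwards [hc_ae, hft] with ω hω hωt
  -- `infDist (f ω) X₀ ≤ infDist d X₀ + ‖f ω - d‖ = φ d (d - f ω) + ‖f ω - d‖ ≤ 2 ‖f ω - d‖`
  have hdist : ∀ d ∈ c, Metric.infDist (f ω) X₀ ≤ 2 * dist (f ω) d := by
    intro d hd
    have hφd : φ d d ≤ dist (f ω) d := by
      calc φ d d = φ d (d - f ω) := by rw [map_sub, hω d hd, sub_zero]
        _ ≤ ‖φ d‖ * ‖d - f ω‖ := (le_abs_self _).trans ((φ d).le_opNorm _)
        _ ≤ 1 * ‖d - f ω‖ := by gcongr; exact hφ_norm d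
        _ = dist (f ω) d := by rw [one_mul, dist_eq_norm']
    linarith [Metric.infDist_le_infDist_add_dist (s := (X₀ : Set X)) (x := f ω) (y := d),
      hφ_eq d]
  rw [← SetLike.mem_coe, ← hX₀.closure_eq, Metric.mem_closure_iff_infDist_zero ⟨0, X₀.zero_mem⟩]
  refine le_antisymm (le_of_forall_pos_le_add fun ε hε => ?_) Metric.infDist_nonneg
  obtain ⟨d, hd, hfd⟩ := Metric.mem_closure_iff.1 (htc hωt) (ε / 2) (half_pos hε)
  linarith [hdist d hd]

theorem ae_eq_zero_of_forall_measure_le_abs_lt {u : α → ℝ}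
    (h : ∀ ε : ℝ, 0 < ε → μ {ω | ε ≤ |u ω|} < ENNReal.ofReal ε) :
    ∀ᵐ ω ∂μ, u ω = 0 := by
  have hlevel : ∀ δ : ℝ, 0 < δ → μ {ω | δ ≤ |u ω|} = 0 := by
    intro δ hδ
    refine le_antisymm (ENNReal.le_of_forall_pos_le_add fun ε hε _ => ?_) zero_le
    calc μ {ω | δ ≤ |u ω|} ≤ μ {ω | min δ ε ≤ |u ω|} :=
          measure_mono fun ω (hω : δ ≤ |u ω|) => (min_le_left _ _).trans hω
      _ ≤ ENNReal.ofReal (min δ ε) := (h _ (lt_min hδ hε)).le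
      _ ≤ 0 + ε := by rw [zero_add, ← ENNReal.ofReal_coe_nnreal]; gcongr; exact min_le_right _ _
  have hsmall : ∀ᵐ ω ∂μ, ∀ n : ℕ, |u ω| < 1 / (n + 1) := ae_all_iff.2 fun n => by
    simpa using measure_eq_zero_iff_ae_notMem.1 (hlevel _ (Nat.one_div_pos_of_nat (α := ℝ)))
  filter_upwards [hsmall] with ω hω
  by_contra hne
  obtain ⟨n, hn⟩ := exists_nat_one_div_lt (abs_pos.2 hne)
  exact (hω n).not_gt hn

theorem Submodule.ae_mem_of_dual_approx_in_measure {X₀ : Submodule ℝ X}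
    (hX₀ : IsClosed (X₀ : Set X)) {f : α → X} (hf : AEStronglyMeasurable f μ)
    (h : ∀ φ : X →L[ℝ] ℝ, ∀ ε : ℝ, 0 < ε → ∃ g : α → X, (∀ᵐ ω ∂μ, g ω ∈ X₀) ∧
      μ {ω | ε ≤ |φ (f ω - g ω)|} < ENNReal.ofReal ε) :
    ∀ᵐ ω ∂μ, f ω ∈ X₀ := by
  refine ae_mem_of_forall_dual_ae_eq_zero hX₀ hf fun φ hφ =>
    ae_eq_zero_of_forall_measure_le_abs_lt fun ε hε => ?_
  obtain ⟨g, hgX₀, hg⟩ := h φ ε hε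
  have hsets : {ω | ε ≤ |φ (f ω - g ω)|} =ᵐ[μ] {ω | ε ≤ |φ (f ω)|} := by
    filter_upwards [hgX₀] with ω hω
    change (ε ≤ |φ (f ω - g ω)|) = (ε ≤ |φ (f ω)|)
    rw [map_sub, hφ _ hω, sub_zero]
  rwa [← measure_congr hsets]

end

theorem stmt_0_general {X : Type*} [NormedAddCommGroup X] [NormedSpace ℝ X]
    (X₀ : Submodule ℝ X) (hX₀ : IsClosed (X₀ : Set X)) :
    (∀ f : ℝ → X, AEStronglyMeasurable f μ01 →
      (∀ ε : ℝ, 0 < ε → ∀ (N : ℕ) (φ : Fin N → X →L[ℝ] ℝ),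
        ∃ g : ℝ → X, AEStronglyMeasurable g μ01 ∧ (∀ᵐ ω ∂μ01, g ω ∈ X₀) ∧
          ∀ i : Fin N, μ01 {ω | ε ≤ |φ i (f ω - g ω)|} < ENNReal.ofReal ε) →
      ∀ᵐ ω ∂μ01, f ω ∈ X₀) ∧
    (∀ (f : ℕ → ℝ → X) (g : ℝ → X), (∀ n, AEStronglyMeasurable (f n) μ01) →
      AEStronglyMeasurable g μ01 → (∀ n, ∀ᵐ ω ∂μ01, f n ω ∈ X₀) →
      ScalarInMeasure f g → ∀ᵐ ω ∂μ01, g ω ∈ X₀) := by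
  refine ⟨fun f hf happrox => X₀.ae_mem_of_dual_approx_in_measure hX₀ hf
    fun φ ε hε => ?_, fun f g _ hg hfX₀ hconv => ?_⟩
  · obtain ⟨g, -, hgX₀, hg⟩ := happrox ε hε 1 fun _ => φ
    exact ⟨g, hgX₀, hg 0⟩
  · refine X₀.ae_mem_of_dual_approx_in_measure hX₀ hg fun φ ε hε => ?_
    obtain ⟨n, hn⟩ := ((tendstoInMeasure_iff_dist.1 (hconv φ) ε hε).eventually_lt_const
      (ENNReal.ofReal_pos.2 hε)).exists
    refine ⟨f n, hfX₀ n, ?_⟩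
    simpa [Real.dist_eq, abs_sub_comm] using hn

theorem stmt_0 {X : Type*} [NormedAddCommGroup X] [NormedSpace ℝ X] [CompleteSpace X]
    (X₀ : Submodule ℝ X) (hX₀ : IsClosed (X₀ : Set X)) :
    (∀ f : ℝ → X, AEStronglyMeasurable f μ01 →
      (∀ ε : ℝ, 0 < ε → ∀ (N : ℕ) (φ : Fin N → X →L[ℝ] ℝ),
        ∃ g : ℝ → X, AEStronglyMeasurable g μ01 ∧ (∀ᵐ ω ∂μ01, g ω ∈ X₀) ∧
          ∀ i : Fin N, μ01 {ω | ε ≤ |φ i (f ω - g ω)|} < ENNReal.ofReal ε) →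
      ∀ᵐ ω ∂μ01, f ω ∈ X₀) ∧
    (∀ (f : ℕ → ℝ → X) (g : ℝ → X), (∀ n, AEStronglyMeasurable (f n) μ01) →
      AEStronglyMeasurable g μ01 → (∀ n, ∀ᵐ ω ∂μ01, f n ω ∈ X₀) →
      ScalarInMeasure f g → ∀ᵐ ω ∂μ01, g ω ∈ X₀) :=
  stmt_0_general X₀ hX₀
end
end

section
/- Suppose every closed separable subspace of the real Banach space X has a separable dual (i.e., X is an Asplund space, equivalently X* has the Radon–Nikodým property). Then: (1) if a sequence (f_n) in L₀(X) converges scalarly a.e. to f ∈ L₀(X), then (f_n) converges weakly a.e. to f if and only if (f_n) is pointwise bounded a.e.; (2) if (f_n) converges scalarly a.e. to f, then (f_n) has a subsequence converging weakly a.e. to f if and only if (f_n) has a subsequence that is pointwise bounded a.e.; (3) if (f_n) converges scalarly in measure to f ∈ L₀(X), then (f_n) has a subsequence converging weakly a.e. to f if and only if (f_n) has a subsequence that is pointwise bounded a.e. -/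
/-!
Weak convergence forces pointwise boundedness by the uniform boundedness principle.
Conversely, almost all values of the `f n` and of `g` lie in one closed separable subspace `Y`,
whose dual is separable since `X` is Asplund; Hahn–Banach extensions of a dense sequence in `Y*`
give countably many functionals `Φ k`. A bounded sequence in `Y` is equicontinuous as a family of
functions on `Y*`, so the functionals along which it converges form a closed set: convergence along
every `Φ k` already gives weak convergence. Scalar a.e. convergence yields convergence along all
`Φ k` off one null set; scalar convergence in measure does so along a subsequence, obtained by a
diagonal Borel–Cantelli argument.
-/

open MeasureTheory Filter Topology ENNReal Set

noncomputable section

section Equicontinuity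

variable {𝕜 E ι : Type*} [NontriviallyNormedField 𝕜] [NormedAddCommGroup E] [NormedSpace 𝕜 E]

theorem tendsto_dual_of_mem_closure {l : Filter ι} {y : ι → E} {z : E}
    (hy : BddAbove (range fun i => ‖y i‖)) {D : Set (StrongDual 𝕜 E)}
    (hD : ∀ φ ∈ D, Tendsto (fun i => φ (y i)) l (𝓝 (φ z))) {φ : StrongDual 𝕜 E}
    (hφ : φ ∈ closure D) :
    Tendsto (fun i => φ (y i)) l (𝓝 (φ z)) := by
  obtain ⟨C, hC⟩ := hy
  have hequi : Equicontinuous fun i => (NormedSpace.inclusionInDoubleDual 𝕜 E (y i) :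
      StrongDual 𝕜 E → 𝕜) :=
    ((NormedSpace.equicontinuous_TFAE
      fun i => NormedSpace.inclusionInDoubleDual 𝕜 E (y i)).out 3 1).1 <| by
      exact ⟨C, fun i ψ => by simpa [mul_comm] using ψ.le_opNorm_of_le (hC ⟨i, rfl⟩)⟩
  exact (hequi.isClosed_setOfPred_tendsto (f := fun ψ : StrongDual 𝕜 E => ψ z)
    (NormedSpace.inclusionInDoubleDual 𝕜 E z).continuous).closure_subset_iff.2 hD hφ

end Equicontinuity

section Dual

variable {𝕜 E : Type*} [RCLike 𝕜] [NormedAddCommGroup E] [NormedSpace 𝕜 E]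

theorem bddAbove_norm_of_forall_tendsto_dual {y : ℕ → E} {z : E}
    (h : ∀ φ : StrongDual 𝕜 E, Tendsto (fun n => φ (y n)) atTop (𝓝 (φ z))) :
    BddAbove (range fun n => ‖y n‖) := by
  obtain ⟨C, hC⟩ := banach_steinhaus (g := fun n => NormedSpace.inclusionInDoubleDualLi 𝕜 (y n))
    fun φ => by
      obtain ⟨C, hC⟩ := (h φ).norm.bddAbove_range
      exact ⟨C, fun n => hC ⟨n, rfl⟩⟩
  exact ⟨C, forall_mem_range.2 fun n =>
    (NormedSpace.inclusionInDoubleDualLi 𝕜).norm_map (y n) ▸ hC n⟩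

theorem exists_seq_dual_tendsto_of_separableSpace_dual (Y : Submodule 𝕜 E)
    [TopologicalSpace.SeparableSpace (StrongDual 𝕜 Y)] :
    ∃ Φ : ℕ → StrongDual 𝕜 E, ∀ {y : ℕ → E} {z : E}, (∀ n, y n ∈ Y) → z ∈ Y →
      BddAbove (range fun n => ‖y n‖) →
      (∀ k, Tendsto (fun n => Φ k (y n)) atTop (𝓝 (Φ k z))) →
      ∀ φ : StrongDual 𝕜 E, Tendsto (fun n => φ (y n)) atTop (𝓝 (φ z)) := by
  obtain ⟨D, hD⟩ := TopologicalSpace.exists_dense_seq (StrongDual 𝕜 Y)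
  choose Φ hΦ _ using fun k => exists_extension_norm_eq Y (D k)
  refine ⟨Φ, fun {y z} hy hz hbdd hconv φ => ?_⟩
  have hbddY : BddAbove (range fun n => ‖(⟨y n, hy n⟩ : Y)‖) := hbdd
  refine tendsto_dual_of_mem_closure (z := (⟨z, hz⟩ : Y)) hbddY (D := range D) ?_
    (hD.closure_eq ▸ mem_univ (φ.comp Y.subtypeL))
  rintro - ⟨k, rfl⟩
  simpa only [← hΦ] using hconv k

end Dual

section Measure

variable {α : Type*} [MeasurableSpace α] {μ : Measure α}

theorem exists_isClosed_separable_submodule_ae_mem {𝕜 E : Type*} [RCLike 𝕜]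
    [NormedAddCommGroup E] [NormedSpace 𝕜 E] {f : ℕ → α → E} {g : α → E}
    (hf : ∀ n, AEStronglyMeasurable (f n) μ) (hg : AEStronglyMeasurable g μ) :
    ∃ Y : Submodule 𝕜 E, IsClosed (Y : Set E) ∧ TopologicalSpace.SeparableSpace Y ∧
      ∀ᵐ x ∂μ, (∀ n, f n x ∈ Y) ∧ g x ∈ Y := by
  choose t ht hft using fun n => (hf n).isSeparable_ae_range
  obtain ⟨u, hu, hgu⟩ := hg.isSeparable_ae_range
  set s := (⋃ n, t n) ∪ u
  have hs : TopologicalSpace.IsSeparable s := (TopologicalSpace.IsSeparable.iUnion ht).union hu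
  refine ⟨(Submodule.span 𝕜 s).topologicalClosure, Submodule.isClosed_topologicalClosure _,
    hs.span.closure.separableSpace, ?_⟩
  have hsY : s ⊆ (Submodule.span 𝕜 s).topologicalClosure :=
    Submodule.subset_span.trans (Submodule.le_topologicalClosure _)
  filter_upwards [ae_all_iff.2 hft, hgu] with x hfx hgx
  exact ⟨fun n => hsY (Or.inl (mem_iUnion.2 ⟨n, hfx n⟩)), hsY (Or.inr hgx)⟩

theorem exists_strictMono_forall_tendsto_ae {E : Type*} [PseudoEMetricSpace E]
    {F : ℕ → ℕ → α → E} {G : ℕ → α → E} (h : ∀ k, TendstoInMeasure μ (F k) atTop (G k)) :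
    ∃ ns : ℕ → ℕ, StrictMono ns ∧
      ∀ k, ∀ᵐ x ∂μ, Tendsto (fun i => F k (ns i) x) atTop (𝓝 (G k x)) := by
  have hsmall : ∀ j, ∀ᶠ n in atTop, ∀ k ∈ Iic j,
      μ {x | 2⁻¹ ^ j ≤ edist (F k n x) (G k x)} ≤ 2⁻¹ ^ j := fun j =>
    have hpos : (0 : ℝ≥0∞) < 2⁻¹ ^ j := ENNReal.pow_pos (by simp) j
    (eventually_all_finite (finite_Iic j)).2 fun k _ => (h k _ hpos).eventually (ge_mem_nhds hpos)
  obtain ⟨ns, hns, hns_small⟩ := extraction_forall_of_eventually hsmall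
  refine ⟨ns, hns, fun k => ?_⟩
  -- Borel–Cantelli along the tail `j ≥ k`, where the estimate for `F k` is available.
  set S : ℕ → Set α := fun j => {x | 2⁻¹ ^ (j + k) ≤ edist (F k (ns (j + k)) x) (G k x)}
  have hS : ∀ j, μ (S j) ≤ 2⁻¹ ^ j := fun j =>
    (hns_small (j + k) k (by simp)).trans (pow_le_pow_right_of_le_one' (by simp) (by omega))
  have hsum : ∑' j, μ (S j) ≠ ∞ :=
    ne_top_of_le_ne_top (by simp [ENNReal.tsum_geometric]) (ENNReal.tsum_le_tsum hS)
  have hlim : Tendsto (fun j => (2⁻¹ : ℝ≥0∞) ^ (j + k)) atTop (𝓝 0) :=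
    (ENNReal.tendsto_pow_atTop_nhds_zero_of_lt_one (by simp)).comp (tendsto_add_atTop_nat k)
  filter_upwards [ae_eventually_notMem hsum] with x hx
  refine (tendsto_add_atTop_iff_nat k).1 (tendsto_iff_edist_tendsto_0.2 ?_)
  exact tendsto_of_tendsto_of_tendsto_of_le_of_le' tendsto_const_nhds hlim
    (Eventually.of_forall fun _ => zero_le) (hx.mono fun j hj => (not_le.1 hj).le)

end Measure

instance : IsProbabilityMeasure μ01 := ⟨by simp [μ01, Real.volume_Icc]⟩

theorem PtwiseBddAE.comp {X : Type*} [NormedAddCommGroup X] {f : ℕ → ℝ → X}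
    (h : PtwiseBddAE f) (s : ℕ → ℕ) : PtwiseBddAE fun n => f (s n) :=
  h.mono fun ω hω => hω.mono (range_comp_subset_range s fun n => ‖f n ω‖)

section UnitInterval

variable {X : Type*} [NormedAddCommGroup X] [NormedSpace ℝ X]

theorem weaklyAE_iff_ae {f : ℕ → ℝ → X} {g : ℝ → X} :
    WeaklyAE f g ↔
      ∀ᵐ ω ∂μ01, ∀ φ : StrongDual ℝ X, Tendsto (fun n => φ (f n ω)) atTop (𝓝 (φ (g ω))) := by
  constructor
  · rintro ⟨A, hAm, hA1, hA⟩
    exact mem_of_superset ((prob_compl_eq_zero_iff hAm).2 hA1) hA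
  · intro h
    obtain ⟨A, hA, hAm, hAconv⟩ := h.exists_measurable_mem
    exact ⟨A, hAm, (prob_compl_eq_zero_iff hAm).1 hA, hAconv⟩

theorem WeaklyAE.ptwiseBddAE {f : ℕ → ℝ → X} {g : ℝ → X} (h : WeaklyAE f g) : PtwiseBddAE f :=
  (weaklyAE_iff_ae.1 h).mono fun _ => bddAbove_norm_of_forall_tendsto_dual

theorem AsplundCond.exists_dual_seq_weaklyAE (hX : AsplundCond X) {f : ℕ → ℝ → X} {g : ℝ → X}
    (hf : ∀ n, AEStronglyMeasurable (f n) μ01) (hg : AEStronglyMeasurable g μ01) :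
    ∃ Φ : ℕ → StrongDual ℝ X, ∀ s : ℕ → ℕ, PtwiseBddAE (fun n => f (s n)) →
      (∀ k, ∀ᵐ ω ∂μ01, Tendsto (fun n => Φ k (f (s n) ω)) atTop (𝓝 (Φ k (g ω)))) →
      WeaklyAE (fun n => f (s n)) g := by
  obtain ⟨Y, hYc, hYs, hmem⟩ := exists_isClosed_separable_submodule_ae_mem (𝕜 := ℝ) hf hg
  have : TopologicalSpace.SeparableSpace (StrongDual ℝ Y) := hX Y hYc hYs
  obtain ⟨Φ, hΦ⟩ := exists_seq_dual_tendsto_of_separableSpace_dual Y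
  refine ⟨Φ, fun s hb hconv => weaklyAE_iff_ae.2 ?_⟩
  filter_upwards [hmem, hb, ae_all_iff.2 hconv] with ω hωY hωb hωconv
  exact hΦ (fun n => hωY.1 (s n)) hωY.2 hωb hωconv

end UnitInterval

theorem stmt_2_general {X : Type*} [NormedAddCommGroup X] [NormedSpace ℝ X]
    (hAsp : AsplundCond X) :
    (∀ (f : ℕ → ℝ → X) (g : ℝ → X), (∀ n, AEStronglyMeasurable (f n) μ01) →
      AEStronglyMeasurable g μ01 → ScalarAE f g →
      (WeaklyAE f g ↔ PtwiseBddAE f)) ∧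
    (∀ (f : ℕ → ℝ → X) (g : ℝ → X), (∀ n, AEStronglyMeasurable (f n) μ01) →
      AEStronglyMeasurable g μ01 → ScalarAE f g →
      ((∃ φ : ℕ → ℕ, StrictMono φ ∧ WeaklyAE (fun k => f (φ k)) g) ↔
       (∃ φ : ℕ → ℕ, StrictMono φ ∧ PtwiseBddAE (fun k => f (φ k))))) ∧
    (∀ (f : ℕ → ℝ → X) (g : ℝ → X), (∀ n, AEStronglyMeasurable (f n) μ01) →
      AEStronglyMeasurable g μ01 → ScalarInMeasure f g →
      ((∃ φ : ℕ → ℕ, StrictMono φ ∧ WeaklyAE (fun k => f (φ k)) g) ↔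
       (∃ φ : ℕ → ℕ, StrictMono φ ∧ PtwiseBddAE (fun k => f (φ k))))) := by
  have subseq_ptwiseBddAE {f : ℕ → ℝ → X} {g : ℝ → X} :
      (∃ s : ℕ → ℕ, StrictMono s ∧ WeaklyAE (fun k => f (s k)) g) →
        ∃ s : ℕ → ℕ, StrictMono s ∧ PtwiseBddAE (fun k => f (s k)) :=
    fun ⟨s, hs, hw⟩ => ⟨s, hs, hw.ptwiseBddAE⟩
  refine ⟨fun f g hf hg hsc => ?_, fun f g hf hg hsc => ?_, fun f g hf hg hsm => ?_⟩ <;>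
    obtain ⟨Φ, hΦ⟩ := hAsp.exists_dual_seq_weaklyAE hf hg
  · exact ⟨WeaklyAE.ptwiseBddAE, fun hb => hΦ id hb fun k => hsc (Φ k)⟩
  · refine ⟨subseq_ptwiseBddAE, fun ⟨s, hs, hb⟩ => ⟨s, hs, hΦ s hb fun k => ?_⟩⟩
    exact (hsc (Φ k)).mono fun _ hω => hω.comp hs.tendsto_atTop
  · refine ⟨subseq_ptwiseBddAE, fun ⟨s, hs, hb⟩ => ?_⟩
    obtain ⟨σ, hσ, hconv⟩ := exists_strictMono_forall_tendsto_ae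
      fun k => (hsm (Φ k)).comp hs.tendsto_atTop
    exact ⟨s ∘ σ, hs.comp hσ, hΦ (s ∘ σ) (hb.comp σ) hconv⟩

theorem stmt_2 {X : Type*} [NormedAddCommGroup X] [NormedSpace ℝ X] [CompleteSpace X]
    (hAsp : AsplundCond X) :
    (∀ (f : ℕ → ℝ → X) (g : ℝ → X), (∀ n, AEStronglyMeasurable (f n) μ01) →
      AEStronglyMeasurable g μ01 → ScalarAE f g →
      (WeaklyAE f g ↔ PtwiseBddAE f)) ∧
    (∀ (f : ℕ → ℝ → X) (g : ℝ → X), (∀ n, AEStronglyMeasurable (f n) μ01) →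
      AEStronglyMeasurable g μ01 → ScalarAE f g →
      ((∃ φ : ℕ → ℕ, StrictMono φ ∧ WeaklyAE (fun k => f (φ k)) g) ↔
       (∃ φ : ℕ → ℕ, StrictMono φ ∧ PtwiseBddAE (fun k => f (φ k))))) ∧
    (∀ (f : ℕ → ℝ → X) (g : ℝ → X), (∀ n, AEStronglyMeasurable (f n) μ01) →
      AEStronglyMeasurable g μ01 → ScalarInMeasure f g →
      ((∃ φ : ℕ → ℕ, StrictMono φ ∧ WeaklyAE (fun k => f (φ k)) g) ↔
       (∃ φ : ℕ → ℕ, StrictMono φ ∧ PtwiseBddAE (fun k => f (φ k))))) :=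
  stmt_2_general hAsp
end
end

section
/- Let (f_n) be a sequence in L₀(X) that converges scalarly in L_∞ to the null function, i.e., ‖x*∘f_n‖_{L_∞(μ)} → 0 for every x* ∈ X*. Then (f_n) converges weakly a.e. to the null function: there is a measurable set A with μ(A) = 1 such that x*(f_n(ω)) → 0 for every ω ∈ A and every x* ∈ X*. -/
open MeasureTheory Filter Topology ENNReal Set

noncomputable section

/-!
Off a null set that does not depend on the functional, the value `f ω` of a strongly measurable
`f` lies in the essential range of `f`: every neighbourhood of `f ω` has a preimage of positive
measure. The remaining points are covered by the countably many null preimages of balls with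
centres in a countable dense subset of the range and rational radii. At a point of the essential
range, `‖x* (f ω)‖ ≤ ‖x* ∘ f‖_∞` for every `x*` at once, so the scalar `L_∞` convergence of the
`f n` forces `x* (f n ω) → 0` on one set of full measure.
-/

section EssentialRange

variable {α X : Type*} [MeasurableSpace α] {μ : Measure α}

theorem ae_measure_preimage_nhds_ne_zero [PseudoMetricSpace X] {f : α → X} {t : Set X}
    (ht : TopologicalSpace.IsSeparable t) (hft : ∀ᵐ ω ∂μ, f ω ∈ t) :
    ∀ᵐ ω ∂μ, ∀ U ∈ 𝓝 (f ω), μ (f ⁻¹' U) ≠ 0 := by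
  obtain ⟨c, hc, htc⟩ := ht
  set S : Set (X × ℚ) := {p | p.1 ∈ c ∧ μ (f ⁻¹' Metric.ball p.1 p.2) = 0}
  have hS : S.Countable :=
    (hc.prod (Set.countable_univ (α := ℚ))).mono fun p hp => Set.mem_prod.2 ⟨hp.1, Set.mem_univ _⟩
  have hnull : ∀ᵐ ω ∂μ, ω ∉ ⋃ p ∈ S, f ⁻¹' Metric.ball p.1 p.2 :=
    measure_eq_zero_iff_ae_notMem.1 ((measure_biUnion_null_iff hS).2 fun p hp => hp.2)
  filter_upwards [hft, hnull] with ω hωt hωS U hU hU0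
  obtain ⟨ε, hε, hεU⟩ := Metric.mem_nhds_iff.1 hU
  obtain ⟨r, hr0, hrε⟩ := exists_rat_btwn (half_pos hε)
  obtain ⟨x, hxc, hωx⟩ := Metric.mem_closure_iff.1 (htc hωt) r (by exact_mod_cast hr0)
  have hball : Metric.ball x r ⊆ U := fun y hy => hεU <| by
    rw [Metric.mem_ball] at hy ⊢
    linarith [dist_triangle y x (f ω), dist_comm x (f ω)]
  exact hωS <| Set.mem_biUnion (x := (x, r)) ⟨hxc, measure_mono_null (Set.preimage_mono hball) hU0⟩
    (Metric.mem_ball.2 hωx)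

theorem apply_mem_of_ae_apply_mem [TopologicalSpace X] {Y : Type*} [TopologicalSpace Y]
    {f : α → X} {ω : α} (hω : ∀ U ∈ 𝓝 (f ω), μ (f ⁻¹' U) ≠ 0) {F : X → Y}
    (hF : ContinuousAt F (f ω)) {K : Set Y} (hK : IsClosed K) (hae : ∀ᵐ ω' ∂μ, F (f ω') ∈ K) :
    F (f ω) ∈ K := by
  by_contra hω'
  exact hω _ (hF.preimage_mem_nhds (hK.isOpen_compl.mem_nhds hω')) (ae_iff.1 hae)

theorem ae_forall_enorm_apply_le_eLpNorm_top [PseudoMetricSpace X] {E : Type*}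
    [TopologicalSpace E] [ContinuousENorm E] {f : α → X} (hf : AEStronglyMeasurable f μ) :
    ∀ᵐ ω ∂μ, ∀ F : X → E, Continuous F → ‖F (f ω)‖ₑ ≤ eLpNorm (fun ω => F (f ω)) ⊤ μ := by
  obtain ⟨t, ht, hft⟩ := hf.isSeparable_ae_range
  filter_upwards [ae_measure_preimage_nhds_ne_zero ht hft] with ω hω F hF
  rw [eLpNorm_exponent_top]
  exact apply_mem_of_ae_apply_mem (F := fun x => ‖F x‖ₑ) hω (hF.enorm.continuousAt) isClosed_Iic
    (enorm_ae_le_eLpNormEssSup _ μ)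

end EssentialRange

theorem stmt_4_general {X : Type*} [NormedAddCommGroup X] [NormedSpace ℝ X]
    (f : ℕ → ℝ → X) (hf : ∀ n, AEStronglyMeasurable (f n) μ01)
    (h : ∀ φ : X →L[ℝ] ℝ,
      Tendsto (fun n => eLpNorm (fun ω => φ (f n ω)) ⊤ μ01) atTop (𝓝 0)) :
    WeaklyAE f (0 : ℝ → X) := by
  have : IsProbabilityMeasure μ01 := ⟨by simp [μ01]⟩
  have hbound := ae_all_iff.2 fun n => ae_forall_enorm_apply_le_eLpNorm_top (E := ℝ) (hf n)
  obtain ⟨N, hbadN, hN, hN0⟩ := exists_measurable_superset_of_null (ae_iff.1 hbound)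
  refine ⟨Nᶜ, hN.compl, (prob_compl_eq_one_iff hN).2 hN0, fun ω hω φ => ?_⟩
  have hωbound := of_not_not fun hbad => hω (hbadN hbad)
  simp only [Pi.zero_apply, map_zero]
  exact tendsto_zero_iff_enorm_tendsto_zero.2 <| tendsto_of_tendsto_of_tendsto_of_le_of_le
    tendsto_const_nhds (h φ) (fun _ => zero_le) fun n => hωbound n φ φ.continuous

theorem stmt_4 {X : Type*} [NormedAddCommGroup X] [NormedSpace ℝ X] [CompleteSpace X]
    (f : ℕ → ℝ → X) (hf : ∀ n, AEStronglyMeasurable (f n) μ01)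
    (h : ∀ φ : X →L[ℝ] ℝ,
      Tendsto (fun n => eLpNorm (fun ω => φ (f n ω)) ⊤ μ01) atTop (𝓝 0)) :
    WeaklyAE f (0 : ℝ → X) :=
  stmt_4_general f hf h
end
end

section
/- Let K be a subset of the real Banach space X that is compact in the weak topology of X, and let (f_n) be a sequence in L₀(X) such that for each n, f_n(ω) ∈ K for μ-a.e. ω. If (f_n) converges scalarly in measure to f ∈ L₀(X), then some subsequence (f_{n_k}) converges weakly a.e. to f; in particular f(ω) ∈ K for μ-a.e. ω. -/
/-!
The values of all `f n` and of `g` lie a.e. in one closed separable subspace `S`, on which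
countably many functionals `ψ i` separate points. Convergence in measure of each `ψ i ∘ f n` gives,
by a diagonal Borel–Cantelli argument, one subsequence along which every `ψ i ∘ f (n k)` converges
a.e. At such a point `ω` the values `f (n k) ω` lie in the weakly compact set `K` and in `S`, which
is weakly closed; so every weak cluster point lies in `S` and agrees with `g ω` on all `ψ i`, hence
equals `g ω`. A sequence in a compact set with a unique cluster point converges to it, so
`f (n k) ω → g ω` weakly and `g ω ∈ K`.
-/

open MeasureTheory Filter Topology ENNReal Set

noncomputable section

/-- Norming functionals of a countable dense subset of `t` separate the points of `t` from `0`. -/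
theorem TopologicalSpace.IsSeparable.exists_seq_dual_eq_zero_imp {𝕜 E : Type*} [RCLike 𝕜]
    [NormedAddCommGroup E] [NormedSpace 𝕜 E] {t : Set E} (ht : TopologicalSpace.IsSeparable t) :
    ∃ ψ : ℕ → StrongDual 𝕜 E, ∀ a ∈ t, (∀ i, ψ i a = 0) → a = 0 := by
  obtain ⟨d, hd_count, htd⟩ := ht
  obtain ⟨e, he⟩ := (hd_count.insert 0).exists_eq_range (Set.insert_nonempty 0 d)
  choose ψ hψ_norm hψ_eq using fun i => exists_dual_vector'' 𝕜 (e i)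
  refine ⟨ψ, fun a hat ha => ?_⟩
  by_contra ha0
  obtain ⟨w, hw, hdist⟩ := Metric.mem_closure_iff.mp
    (closure_mono (Set.subset_insert 0 d) (htd hat)) (‖a‖ / 2) (half_pos (norm_pos_iff.mpr ha0))
  obtain ⟨i, rfl⟩ : w ∈ Set.range e := he ▸ hw
  rw [dist_eq_norm] at hdist
  have h_lower : ‖a‖ / 2 < ‖e i‖ := by linarith [norm_le_insert' a (e i)]
  have h_upper : ‖e i‖ ≤ ‖a - e i‖ := by
    calc ‖e i‖ = ‖ψ i (e i - a)‖ := by simp [hψ_eq i, ha i]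
    _ ≤ 1 * ‖e i - a‖ := (ψ i).le_of_opNorm_le (hψ_norm i) _
    _ = ‖a - e i‖ := by rw [one_mul, norm_sub_rev]
  linarith

theorem exists_isClosed_isSeparable_submodule_ae_forall_mem {α ι 𝕜 E : Type*}
    [MeasurableSpace α] {μ : Measure α} [Countable ι] [NontriviallyNormedField 𝕜]
    [TopologicalSpace.SeparableSpace 𝕜] [NormedAddCommGroup E] [NormedSpace 𝕜 E]
    {f : ι → α → E} (hf : ∀ i, AEStronglyMeasurable (f i) μ) :
    ∃ S : Submodule 𝕜 E, IsClosed (S : Set E) ∧ TopologicalSpace.IsSeparable (S : Set E) ∧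
      ∀ᵐ x ∂μ, ∀ i, f i x ∈ S := by
  choose t ht hft using fun i => (hf i).isSeparable_ae_range
  refine ⟨(Submodule.span 𝕜 (⋃ i, t i)).topologicalClosure,
    Submodule.isClosed_topologicalClosure _, ?_, ?_⟩
  · rw [Submodule.topologicalClosure_coe]
    exact (TopologicalSpace.IsSeparable.iUnion ht).span.closure
  · filter_upwards [ae_all_iff.mpr hft] with x hx i
    exact Submodule.le_topologicalClosure _ (Submodule.subset_span (Set.mem_iUnion_of_mem i (hx i)))

theorem MeasureTheory.TendstoInMeasure.exists_seq_tendsto_ae_forall {α E : Type*}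
    [MeasurableSpace α] {μ : Measure α} [PseudoMetricSpace E] {f : ℕ → ℕ → α → E} {g : ℕ → α → E}
    (hfg : ∀ i, TendstoInMeasure μ (f i) atTop (g i)) :
    ∃ ns : ℕ → ℕ, StrictMono ns ∧
      ∀ i, ∀ᵐ x ∂μ, Tendsto (fun k => f i (ns k) x) atTop (𝓝 (g i x)) := by
  set bad : ℕ → ℕ → ℕ → Set α := fun i k n => {x | (2 : ℝ)⁻¹ ^ k ≤ dist (f i n x) (g i x)}
  have h_small : ∀ k, ∀ᶠ n in atTop, ∀ i ∈ Set.Iic k, μ (bad i k n) ≤ (2 : ℝ≥0∞)⁻¹ ^ k := by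
    intro k
    rw [eventually_all_finite (Set.finite_Iic k)]
    exact fun i _ => (tendstoInMeasure_iff_dist.mp (hfg i) _ (by positivity)).eventually_le_const
      (ENNReal.pow_pos (by simp) k)
  obtain ⟨ns, hns, h_bad⟩ := extraction_forall_of_eventually h_small
  refine ⟨ns, hns, fun i => ?_⟩
  -- Borel–Cantelli along the tail `k ≥ i`, where the bound `2⁻¹ ^ k` is available.
  have h_sum : ∑' k, μ (bad i (k + i) (ns (k + i))) ≠ ∞ := by
    refine ne_top_of_le_ne_top ?_ (ENNReal.tsum_le_tsum fun k =>
      (h_bad (k + i) i (Nat.le_add_left i k)).trans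
        (pow_le_pow_of_le_one zero_le (ENNReal.inv_le_one.mpr one_le_two) (Nat.le_add_right k i)))
    rw [ENNReal.tsum_geometric, ENNReal.one_sub_inv_two, inv_inv]
    exact ENNReal.ofNat_ne_top
  filter_upwards [ae_eventually_notMem h_sum] with x hx
  rw [← tendsto_add_atTop_iff_nat i, tendsto_iff_dist_tendsto_zero]
  refine squeeze_zero' (Eventually.of_forall fun k => dist_nonneg) (hx.mono fun k hk => ?_)
    ((tendsto_pow_atTop_nhds_zero_of_lt_one (by norm_num) (by norm_num : (2 : ℝ)⁻¹ < 1)).comp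
      (tendsto_add_atTop_nat i))
  exact (not_le.mp hk).le

theorem IsCompact.mem_and_tendsto_of_unique_mapClusterPt {X Y : Type*} [TopologicalSpace X]
    {s : Set X} {l : Filter Y} [l.NeBot] {u : Y → X} {y : X} (hs : IsCompact s)
    (hmem : ∀ᶠ a in l, u a ∈ s) (h : ∀ x, MapClusterPt x l u → x = y) :
    y ∈ s ∧ Tendsto u l (𝓝 y) := by
  obtain ⟨z, hz, hzu⟩ := hs.exists_mapClusterPt (le_principal_iff.mpr hmem)
  exact ⟨h z hzu ▸ hz, hs.tendsto_nhds_of_unique_mapClusterPt hmem fun x _ hx => h x hx⟩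

section WeakTopology

variable {X : Type*} [NormedAddCommGroup X] [NormedSpace ℝ X]

theorem continuous_apply_toWeakSpace_symm (φ : X →L[ℝ] ℝ) :
    Continuous fun z : WeakSpace ℝ X => φ ((toWeakSpace ℝ X).symm z) :=
  WeakBilin.eval_continuous (topDualPairing ℝ X).flip φ

/-- A closed subspace is weakly closed (Mazur), so a weak cluster point of a sequence in `S`
lies in `S`, where the functionals `ψ i` identify it with the limit `b`. -/
theorem mapClusterPt_toWeakSpace_eq {ι : Type*} {S : Submodule ℝ X} (hS : IsClosed (S : Set X))
    {ψ : ι → X →L[ℝ] ℝ} (hψ : ∀ z ∈ S, (∀ i, ψ i z = 0) → z = 0) {x : ℕ → X} {b : X}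
    (hxS : ∀ k, x k ∈ S) (hb : b ∈ S)
    (hlim : ∀ i, Tendsto (fun k => ψ i (x k)) atTop (𝓝 (ψ i b))) {y : WeakSpace ℝ X}
    (hy : MapClusterPt y atTop (fun k => toWeakSpace ℝ X (x k))) :
    y = toWeakSpace ℝ X b := by
  have hS_weak : IsClosed (toWeakSpace ℝ X '' S) := by
    rw [← hS.closure_eq, S.convex.toWeakSpace_closure ℝ]
    exact isClosed_closure
  obtain ⟨z, hzS, rfl⟩ : y ∈ toWeakSpace ℝ X '' S := hS_weak.closure_subset <|
    hy.mem_closure_of_mem _ <|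
      mem_map.mpr (Eventually.of_forall fun k => Set.mem_image_of_mem _ (hxS k))
  have h_eval : ∀ i, ψ i z = ψ i b := fun i =>
    have hψy := hy.tendsto_comp ((continuous_apply_toWeakSpace_symm (ψ i)).tendsto _)
    eq_of_nhds_neBot (hψy.clusterPt.mono (hlim i))
  rw [sub_eq_zero.mp (hψ (z - b) (S.sub_mem hzS hb) fun i => by rw [map_sub, h_eval, sub_self])]

theorem IsCompact.tendsto_dual_and_mem_of_separating {ι : Type*} {K : Set X}
    (hK : IsCompact (toWeakSpace ℝ X '' K)) {S : Submodule ℝ X} (hS : IsClosed (S : Set X))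
    {ψ : ι → X →L[ℝ] ℝ} (hψ : ∀ z ∈ S, (∀ i, ψ i z = 0) → z = 0) {x : ℕ → X} {b : X}
    (hxK : ∀ k, x k ∈ K) (hxS : ∀ k, x k ∈ S) (hb : b ∈ S)
    (hlim : ∀ i, Tendsto (fun k => ψ i (x k)) atTop (𝓝 (ψ i b))) :
    (∀ φ : X →L[ℝ] ℝ, Tendsto (fun k => φ (x k)) atTop (𝓝 (φ b))) ∧ b ∈ K := by
  obtain ⟨hbK, hweak⟩ := hK.mem_and_tendsto_of_unique_mapClusterPt
    (Eventually.of_forall fun k => Set.mem_image_of_mem _ (hxK k))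
    fun y hy => mapClusterPt_toWeakSpace_eq hS hψ hxS hb hlim hy
  exact ⟨fun φ => ((continuous_apply_toWeakSpace_symm φ).tendsto _).comp hweak,
    (toWeakSpace ℝ X).injective.mem_set_image.mp hbK⟩

theorem weaklyAE_of_ae {f : ℕ → ℝ → X} {g : ℝ → X}
    (h : ∀ᵐ ω ∂μ01, ∀ φ : X →L[ℝ] ℝ, Tendsto (fun n => φ (f n ω)) atTop (𝓝 (φ (g ω)))) :
    WeaklyAE f g := by
  obtain ⟨A, hA, hA_meas, hA_conv⟩ := h.exists_measurable_mem
  refine ⟨A, hA_meas, ?_, hA_conv⟩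
  rw [measure_congr (ae_eq_univ.mpr (mem_ae_iff.mp hA))]
  simp [μ01]

end WeakTopology

theorem stmt_5_general {X : Type*} [NormedAddCommGroup X] [NormedSpace ℝ X]
    (K : Set X) (hK : IsCompact (toWeakSpace ℝ X '' K))
    (f : ℕ → ℝ → X) (g : ℝ → X) (hf : ∀ n, AEStronglyMeasurable (f n) μ01)
    (hg : AEStronglyMeasurable g μ01)
    (hfK : ∀ n, ∀ᵐ ω ∂μ01, f n ω ∈ K)
    (hconv : ScalarInMeasure f g) :
    (∃ φ : ℕ → ℕ, StrictMono φ ∧ WeaklyAE (fun k => f (φ k)) g) ∧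
    (∀ᵐ ω ∂μ01, g ω ∈ K) := by
  obtain ⟨S, hS, hS_sep, hS_mem⟩ := exists_isClosed_isSeparable_submodule_ae_forall_mem (𝕜 := ℝ)
    (f := fun o : Option ℕ => o.elim g f) (by rintro (_ | n); exacts [hg, hf n])
  obtain ⟨ψ, hψ⟩ := hS_sep.exists_seq_dual_eq_zero_imp (𝕜 := ℝ)
  obtain ⟨ns, hns, hψ_lim⟩ := TendstoInMeasure.exists_seq_tendsto_ae_forall
    (f := fun i n ω => ψ i (f n ω)) (g := fun i ω => ψ i (g ω)) fun i => hconv (ψ i)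
  have h_ae : ∀ᵐ ω ∂μ01, (∀ φ : X →L[ℝ] ℝ,
      Tendsto (fun k => φ (f (ns k) ω)) atTop (𝓝 (φ (g ω)))) ∧ g ω ∈ K := by
    filter_upwards [ae_all_iff.mpr hψ_lim, ae_all_iff.mpr hfK, hS_mem] with ω hω_lim hωK hωS
    exact hK.tendsto_dual_and_mem_of_separating hS hψ (fun k => hωK (ns k))
      (fun k => hωS (some (ns k))) (hωS none) hω_lim
  exact ⟨⟨ns, hns, weaklyAE_of_ae (h_ae.mono fun _ h => h.1)⟩, h_ae.mono fun _ h => h.2⟩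

theorem stmt_5 {X : Type*} [NormedAddCommGroup X] [NormedSpace ℝ X] [CompleteSpace X]
    (K : Set X) (hK : IsCompact (toWeakSpace ℝ X '' K))
    (f : ℕ → ℝ → X) (g : ℝ → X) (hf : ∀ n, AEStronglyMeasurable (f n) μ01)
    (hg : AEStronglyMeasurable g μ01)
    (hfK : ∀ n, ∀ᵐ ω ∂μ01, f n ω ∈ K)
    (hconv : ScalarInMeasure f g) :
    (∃ φ : ℕ → ℕ, StrictMono φ ∧ WeaklyAE (fun k => f (φ k)) g) ∧
    (∀ᵐ ω ∂μ01, g ω ∈ K) :=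
  stmt_5_general K hK f g hf hg hfK hconv
end
end

section
/- Let K be a subset of the real Banach space X that is compact in the weak topology of X, and let (f_n) be a sequence in L₀(X) such that for each n, f_n(ω) ∈ K for μ-a.e. ω. If (f_n) converges scalarly a.e. to f ∈ L₀(X), then (f_n) converges weakly a.e. to f. -/
open MeasureTheory Filter Topology ENNReal Set

noncomputable section

/-! The values of all `f n` and of `g` lie a.e. in a closed separable subspace `Y`, which is weakly
closed (Mazur), and a countable set `S` of functionals separates the points of `Y`. Discarding one
null set, `φ (f n ω) → φ (g ω)` for all `φ ∈ S` at once. For such `ω` the sequence `f n ω` stays in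
the weakly compact set `K ∩ Y`, and each of its weak cluster points agrees with `g ω` on `S`, hence
equals `g ω`; so `f n ω → g ω` weakly. -/

open TopologicalSpace

theorem IsCompact.tendsto_nhds_of_forall_tendsto_comp {E Z ι α : Type*} [TopologicalSpace E]
    [TopologicalSpace Z] [T2Space Z] {s : Set E} (hs : IsCompact s) {φ : ι → E → Z}
    (hφ : ∀ i, Continuous (φ i)) {l : Filter α} {u : α → E} {x : E}
    (hus : ∀ᶠ a in l, u a ∈ s) (hsep : ∀ y ∈ s, (∀ i, φ i y = φ i x) → y = x)
    (hlim : ∀ i, Tendsto (fun a => φ i (u a)) l (𝓝 (φ i x))) : Tendsto u l (𝓝 x) :=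
  hs.tendsto_nhds_of_unique_mapClusterPt hus fun y hy hyu => hsep y hy fun i =>
    eq_of_nhds_neBot ((hyu.tendsto_comp ((hφ i).tendsto y)).clusterPt.mono (hlim i))

section NormedSpace

variable {E : Type*} [NormedAddCommGroup E] [NormedSpace ℝ E]

theorem TopologicalSpace.IsSeparable.exists_countable_dual_eq_zero {t : Set E}
    (ht : IsSeparable t) :
    ∃ S : Set (StrongDual ℝ E), S.Countable ∧ ∀ a ∈ t, (∀ φ ∈ S, φ a = 0) → a = 0 := by
  obtain ⟨d, hd, htd⟩ := ht
  choose φ hφ_norm hφ_eq using fun x : E => exists_dual_vector'' ℝ x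
  refine ⟨φ '' d, hd.image φ, fun a ha h0 => norm_le_zero_iff.mp ?_⟩
  have hnorm : ∀ x ∈ d, ‖x‖ ≤ dist a x := fun x hx => calc
    ‖x‖ = φ x (x - a) := by rw [map_sub, h0 _ (mem_image_of_mem φ hx), sub_zero, hφ_eq]; rfl
    _ ≤ ‖φ x‖ * ‖x - a‖ := (le_abs_self _).trans ((φ x).le_opNorm _)
    _ ≤ dist a x := by
      rw [dist_comm, dist_eq_norm]
      exact mul_le_of_le_one_left (norm_nonneg _) (hφ_norm x)
  refine le_of_forall_pos_lt_add fun ε hε => ?_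
  obtain ⟨x, hx, hax⟩ := Metric.mem_closure_iff.1 (htd ha) (ε / 2) (half_pos hε)
  linarith [norm_le_insert' a x, hnorm x hx, dist_eq_norm a x]

theorem TopologicalSpace.IsSeparable.exists_weakClosed_superset_countable_separating
    {s : Set E} (hs : IsSeparable s) :
    ∃ F : Set E, s ⊆ F ∧ IsClosed (toWeakSpace ℝ E '' F) ∧
      ∃ S : Set (StrongDual ℝ E), S.Countable ∧
        ∀ x ∈ F, ∀ y ∈ F, (∀ φ ∈ S, φ x = φ y) → x = y := by
  set Y := (Submodule.span ℝ s).topologicalClosure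
  have hY : (Y : Set E) = closure (Submodule.span ℝ s) := Submodule.topologicalClosure_coe _
  obtain ⟨S, hS, hsep⟩ := (hY ▸ hs.span.closure).exists_countable_dual_eq_zero
  refine ⟨Y, Submodule.subset_span.trans (Submodule.le_topologicalClosure _), ?_, S, hS,
    fun x hx y hy h => sub_eq_zero.1 (hsep _ (Y.sub_mem hx hy) fun φ hφ => ?_)⟩
  · rw [hY, Convex.toWeakSpace_closure ℝ (Submodule.span ℝ s).convex]
    exact isClosed_closure
  · rw [map_sub, h φ hφ, sub_self]

theorem tendsto_dual_of_isCompact_toWeakSpace {α : Type*} {K : Set E}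
    (hK : IsCompact (toWeakSpace ℝ E '' K)) {S : Set (StrongDual ℝ E)} {x : E}
    (hsep : ∀ y ∈ K, (∀ φ ∈ S, φ y = φ x) → y = x) {l : Filter α} {u : α → E}
    (hu : ∀ᶠ a in l, u a ∈ K) (hlim : ∀ φ ∈ S, Tendsto (fun a => φ (u a)) l (𝓝 (φ x)))
    (ψ : StrongDual ℝ E) : Tendsto (fun a => ψ (u a)) l (𝓝 (ψ x)) := by
  have hcont (φ : StrongDual ℝ E) :
      Continuous fun w : WeakSpace ℝ E => φ ((toWeakSpace ℝ E).symm w) :=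
    WeakBilin.eval_continuous _ φ
  have hweak : Tendsto (fun a => toWeakSpace ℝ E (u a)) l (𝓝 (toWeakSpace ℝ E x)) := by
    refine hK.tendsto_nhds_of_forall_tendsto_comp
      (φ := fun φ : S => fun w => φ.1 ((toWeakSpace ℝ E).symm w)) (fun φ => hcont φ)
      (hu.mono fun a ha => mem_image_of_mem _ ha) ?_ (fun φ => by simpa using hlim φ φ.2)
    rintro _ ⟨y, hy, rfl⟩ h
    exact congrArg _ (hsep y hy fun φ hφ => by simpa using h ⟨φ, hφ⟩)
  exact ((hcont ψ).tendsto _).comp hweak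

end NormedSpace

instance isProbabilityMeasure_μ01 : IsProbabilityMeasure μ01 := ⟨by simp [μ01]⟩

theorem stmt_6_general {X : Type*} [NormedAddCommGroup X] [NormedSpace ℝ X]
    (K : Set X) (hK : IsCompact (toWeakSpace ℝ X '' K))
    (f : ℕ → ℝ → X) (g : ℝ → X) (hf : ∀ n, AEStronglyMeasurable (f n) μ01)
    (hg : AEStronglyMeasurable g μ01)
    (hfK : ∀ n, ∀ᵐ ω ∂μ01, f n ω ∈ K)
    (hconv : ScalarAE f g) :
    WeaklyAE f g := by
  choose t ht hft using fun n => (hf n).isSeparable_ae_range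
  obtain ⟨tg, htg, hgt⟩ := hg.isSeparable_ae_range
  obtain ⟨F, htF, hF, S, hS, hsep⟩ :=
    ((IsSeparable.iUnion ht).union htg).exists_weakClosed_superset_countable_separating
  have hKF : IsCompact (toWeakSpace ℝ X '' (K ∩ F)) := by
    rw [image_inter (toWeakSpace ℝ X).injective]
    exact hK.inter_right hF
  have hae : ∀ᵐ ω ∂μ01, (∀ n, f n ω ∈ K ∩ F) ∧ g ω ∈ F ∧
      ∀ φ ∈ S, Tendsto (fun n => φ (f n ω)) atTop (𝓝 (φ (g ω))) := by
    have hfF : ∀ᵐ ω ∂μ01, ∀ n, f n ω ∈ F := ae_all_iff.2 fun n =>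
      (hft n).mono fun ω h => htF (.inl (mem_iUnion_of_mem n h))
    filter_upwards [ae_all_iff.2 hfK, hfF, hgt, (ae_ball_iff hS).2 fun φ _ => hconv φ]
      with ω hfωK hfωF hgω hlim
    exact ⟨fun n => ⟨hfωK n, hfωF n⟩, htF (.inr hgω), hlim⟩
  obtain ⟨A, hAae, hA, hAP⟩ := hae.exists_measurable_mem
  refine ⟨A, hA, (prob_compl_eq_zero_iff hA).1 (mem_ae_iff.1 hAae), fun ω hω ψ => ?_⟩
  obtain ⟨hfKF, hgF, hlim⟩ := hAP ω hω
  exact tendsto_dual_of_isCompact_toWeakSpace hKF (fun y hy h => hsep y hy.2 _ hgF h)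
    (.of_forall hfKF) hlim ψ

theorem stmt_6 {X : Type*} [NormedAddCommGroup X] [NormedSpace ℝ X] [CompleteSpace X]
    (K : Set X) (hK : IsCompact (toWeakSpace ℝ X '' K))
    (f : ℕ → ℝ → X) (g : ℝ → X) (hf : ∀ n, AEStronglyMeasurable (f n) μ01)
    (hg : AEStronglyMeasurable g μ01)
    (hfK : ∀ n, ∀ᵐ ω ∂μ01, f n ω ∈ K)
    (hconv : ScalarAE f g) :
    WeaklyAE f g :=
  stmt_6_general K hK f g hf hg hfK hconv
end
end

section
/- Let X = C([0,1], ℝ) with the supremum norm. There exists a sequence (f_n) in L₀(X) with ‖f_n(ω)‖_∞ ≤ 1 for μ-a.e. ω and every n (i.e., (f_n) lies in the unit ball of L_∞(X)) such that (f_n) converges scalarly in measure to the null function, yet no subsequence of (f_n) converges scalarly a.e. to the null function. Thus C[0,1] fails property (D_∞). -/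
open MeasureTheory Filter Topology ENNReal Set

noncomputable section

/-!
Let `digitBump n` be a bump supported where the `(n+1)`-st base-4 digit is `1`, and split it
as `∑ k, levelBump n k` according to the number `k` of digits `1` among the first `n` digits.
For fixed `n` the `levelBump n k` have disjoint supports, and so do they for fixed `k`, since
that count strictly increases from one such level to the next. Hence for every functional `φ`
on `C[0,1]` we get `∑ k, |φ (levelBump n k)| ≤ ‖φ‖` and `φ (levelBump n k) → 0` as `n → ∞`.
With `f n ω = ∑ k, 1_{J k}(ω) • levelBump n k` for typewriter arcs `J k` of length `1/(k+1)`,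
this forces `‖φ ∘ f n‖₁ → 0`. Given indices `m j` with gaps at least two, at the point whose
digits `1` sit exactly in the places `m j + 1` we have `f (m j) ω = 1_{J j}(ω)`; since every `ω`
lies in infinitely many arcs `J j`, evaluation at that point converges for no `ω`.
-/

section DisjointSupports

variable {α ι : Type*} [TopologicalSpace α] [CompactSpace α]

theorem ContinuousMap.sum_abs_apply_le_opNorm (φ : C(α, ℝ) →L[ℝ] ℝ) {e : ι → C(α, ℝ)}
    (he : ∀ i, ‖e i‖ ≤ 1)
    (hdisj : Pairwise fun i j => Disjoint (Function.support (e i)) (Function.support (e j)))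
    (s : Finset ι) : ∑ i ∈ s, |φ (e i)| ≤ ‖φ‖ := by
  -- test `φ` against the signed sum, which has norm at most one since the supports are disjoint
  set h : C(α, ℝ) := ∑ i ∈ s, (SignType.sign (φ (e i)) : ℝ) • e i
  have hh : ‖h‖ ≤ 1 := by
    refine (ContinuousMap.norm_le _ zero_le_one).2 fun x => ?_
    simp only [h, ContinuousMap.sum_apply, ContinuousMap.smul_apply, smul_eq_mul]
    by_cases hx : ∃ i ∈ s, e i x ≠ 0
    · obtain ⟨i, hi, hix⟩ := hx
      rw [Finset.sum_eq_single_of_mem i hi fun j _ hji => by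
        rw [Function.notMem_support.1 (Set.disjoint_right.1 (hdisj hji) hix), mul_zero]]
      have hsign : ‖(SignType.sign (φ (e i)) : ℝ)‖ ≤ 1 := by
        cases SignType.sign (φ (e i)) <;> simp
      simpa [norm_mul] using
        mul_le_one₀ hsign (norm_nonneg _) (((e i).norm_coe_le_norm x).trans (he i))
    · push Not at hx
      rw [Finset.sum_eq_zero fun i hi => by rw [hx i hi, mul_zero]]
      simp
  calc ∑ i ∈ s, |φ (e i)| = φ h := by
        simp [h, map_sum, map_smul, sign_mul_self]
    _ ≤ ‖φ‖ * ‖h‖ := (le_abs_self _).trans (φ.le_opNorm h)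
    _ ≤ ‖φ‖ := mul_le_of_le_one_right φ.opNorm_nonneg hh

theorem ContinuousMap.tendsto_abs_apply_of_pairwise_disjoint (φ : C(α, ℝ) →L[ℝ] ℝ)
    {e : ℕ → C(α, ℝ)} (he : ∀ i, ‖e i‖ ≤ 1)
    (hdisj : Pairwise fun i j => Disjoint (Function.support (e i)) (Function.support (e j))) :
    Tendsto (fun n => |φ (e n)|) atTop (𝓝 0) :=
  (summable_of_sum_range_le (fun _ => abs_nonneg _) fun _ =>
    sum_abs_apply_le_opNorm φ he hdisj _).tendsto_atTop_zero

end DisjointSupports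

lemma sum_mul_le_of_le {a b : ℕ → ℝ} {s : Finset ℕ} {K : ℕ} {B δ : ℝ} (ha : ∀ k, 0 ≤ a k)
    (hb : ∀ k, 0 ≤ b k) (hbB : ∀ k, b k ≤ B) (hbδ : ∀ k ≥ K, b k ≤ δ) :
    ∑ k ∈ s, a k * b k ≤ B * ∑ k ∈ Finset.range K, a k + δ * ∑ k ∈ s, a k := by
  rw [← Finset.sum_filter_add_sum_filter_not s (· < K), Finset.mul_sum, Finset.mul_sum]
  refine add_le_add ?_ ?_
  · calc _ ≤ ∑ k ∈ s.filter (· < K), B * a k := Finset.sum_le_sum fun k _ => by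
          rw [mul_comm B]
          exact mul_le_mul_of_nonneg_left (hbB k) (ha k)
      _ ≤ _ := Finset.sum_le_sum_of_subset_of_nonneg
          (fun k hk => Finset.mem_range.2 (Finset.mem_filter.1 hk).2)
          fun k _ _ => mul_nonneg ((hb k).trans (hbB k)) (ha k)
  · calc _ ≤ ∑ k ∈ s.filter (¬ · < K), δ * a k := Finset.sum_le_sum fun k hk => by
          rw [mul_comm δ]
          exact mul_le_mul_of_nonneg_left (hbδ k (not_lt.1 (Finset.mem_filter.1 hk).2)) (ha k)
      _ ≤ _ := Finset.sum_le_sum_of_subset_of_nonneg (Finset.filter_subset _ s)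
          fun k _ _ => mul_nonneg ((hb K).trans (hbδ K le_rfl)) (ha k)

theorem tendsto_sum_mul_of_tendsto_zero {a : ℕ → ℕ → ℝ} {b : ℕ → ℝ} {s : ℕ → Finset ℕ} {C : ℝ}
    (ha_nonneg : ∀ n k, 0 ≤ a n k) (ha : ∀ k, Tendsto (fun n => a n k) atTop (𝓝 0))
    (hC : ∀ n, ∑ k ∈ s n, a n k ≤ C) (hb_nonneg : ∀ k, 0 ≤ b k)
    (hb : Tendsto b atTop (𝓝 0)) :
    Tendsto (fun n => ∑ k ∈ s n, a n k * b k) atTop (𝓝 0) := by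
  obtain ⟨B, hB⟩ := hb.bddAbove_range
  have hC0 : 0 ≤ C := (Finset.sum_nonneg fun k _ => ha_nonneg 0 k).trans (hC 0)
  refine Metric.tendsto_atTop.2 fun ε hε => ?_
  set δ := ε / (2 * (C + 1)) with hδ_def
  have hδ : 0 < δ := by positivity
  have hδC : δ * C < ε / 2 := by
    rw [hδ_def, div_mul_eq_mul_div, div_lt_div_iff₀ (by positivity) two_pos]
    nlinarith
  obtain ⟨K, hK⟩ := eventually_atTop.1 (hb.eventually (eventually_le_nhds hδ))
  have hhead : Tendsto (fun n => B * ∑ k ∈ Finset.range K, a n k) atTop (𝓝 0) := by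
    simpa using (tendsto_finsetSum _ fun k _ => ha k).const_mul B
  obtain ⟨N, hN⟩ := eventually_atTop.1 (hhead.eventually (eventually_lt_nhds (half_pos hε)))
  refine ⟨N, fun n hn => ?_⟩
  have hsum := sum_mul_le_of_le (s := s n) (ha_nonneg n) hb_nonneg (fun k => hB ⟨k, rfl⟩) hK
  have htail := mul_le_mul_of_nonneg_left (hC n) hδ.le
  rw [Real.dist_eq, sub_zero,
    abs_of_nonneg (Finset.sum_nonneg fun k _ => mul_nonneg (ha_nonneg n k) (hb_nonneg k))]
  linarith [hN n hn]

section Typewriter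

def arcStart (k : ℕ) : ℝ := ∑ i ∈ Finset.range k, 1 / ((i : ℝ) + 1)

/-- Arcs of length `1 / (k + 1)` of the circle `ℝ / ℤ`, laid end to end. -/
def typewriterArc (k : ℕ) : Set ℝ := {x | Int.fract (x - arcStart k) < 1 / ((k : ℝ) + 1)}

lemma arcStart_succ (k : ℕ) : arcStart (k + 1) = arcStart k + 1 / ((k : ℝ) + 1) :=
  Finset.sum_range_succ _ _

lemma measurableSet_typewriterArc (k : ℕ) : MeasurableSet (typewriterArc k) :=
  (measurable_fract.comp (measurable_id.sub_const _)) measurableSet_Iio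

lemma exists_mem_Ico_of_tendsto_atTop {S : ℕ → ℝ} (hS : Tendsto S atTop atTop) {K : ℕ} {y : ℝ}
    (hy : S K ≤ y) : ∃ k ≥ K, y ∈ Ico (S k) (S (k + 1)) := by
  by_contra! h
  have hle : ∀ k ≥ K, S k ≤ y := Nat.le_induction hy fun k hk ih => by
    by_contra! hlt
    exact h k hk ⟨ih, hlt⟩
  obtain ⟨k, hk, hKk⟩ := ((hS.eventually_gt_atTop y).and (eventually_ge_atTop K)).exists
  exact (hle k hKk).not_gt hk

lemma frequently_mem_typewriterArc (x : ℝ) : ∃ᶠ k in atTop, x ∈ typewriterArc k := by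
  refine frequently_atTop.2 fun K => ?_
  set y := arcStart K + Int.fract (x - arcStart K)
  obtain ⟨k, hk, hyk, hyk'⟩ := exists_mem_Ico_of_tendsto_atTop
    (S := arcStart) Real.tendsto_sum_range_one_div_nat_succ_atTop (K := K) (y := y)
    (le_add_of_nonneg_right (Int.fract_nonneg _))
  refine ⟨k, hk, ?_⟩
  have hx : x - arcStart k = (y - arcStart k) + ⌊x - arcStart K⌋ := by
    simp only [y, Int.fract]
    ring
  have hlen : 1 / ((k : ℝ) + 1) ≤ 1 := by
    rw [div_le_one (by positivity)]
    linarith [k.cast_nonneg (α := ℝ)]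
  rw [arcStart_succ] at hyk'
  change Int.fract (x - arcStart k) < _
  rw [hx, Int.fract_add_intCast, Int.fract_eq_self.2 ⟨by linarith, by linarith⟩]
  linarith

lemma not_tendsto_indicator_typewriterArc (ω : ℝ) :
    ¬ Tendsto (fun k => (typewriterArc k).indicator (1 : ℝ → ℝ) ω) atTop (𝓝 0) := fun h => by
  obtain ⟨k, hk, hωk⟩ :=
    ((h.eventually (gt_mem_nhds one_pos)).and_frequently (frequently_mem_typewriterArc ω)).exists
  simp [hωk] at hk

lemma μ01_typewriterArc_le (k : ℕ) :
    μ01 (typewriterArc k) ≤ ENNReal.ofReal (2 / ((k : ℝ) + 1)) := by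
  set c := arcStart k
  set d := 1 / ((k : ℝ) + 1)
  set z := ⌊-c⌋
  have hsub : typewriterArc k ∩ Icc 0 1 ⊆
      Ico (c + z) (c + z + d) ∪ Ico (c + (z + 1 : ℤ)) (c + (z + 1 : ℤ) + d) := by
    rintro x ⟨hx, hx0, hx1⟩
    have hfr : x - c - ⌊x - c⌋ < d := hx
    have hfl := Int.floor_le (x - c)
    have h1 : z ≤ ⌊x - c⌋ := Int.floor_mono (by linarith)
    have h2 : ⌊x - c⌋ ≤ z + 1 := by
      rw [← Int.floor_add_one]
      exact Int.floor_mono (by linarith)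
    obtain h | h : ⌊x - c⌋ = z ∨ ⌊x - c⌋ = z + 1 := by omega
    · left
      rw [h] at hfl hfr
      constructor <;> linarith
    · right
      rw [h] at hfl hfr
      constructor <;> linarith
  rw [μ01, Measure.restrict_apply (measurableSet_typewriterArc k)]
  calc _ ≤ _ := measure_mono hsub
    _ ≤ _ := measure_union_le _ _
    _ = ENNReal.ofReal d + ENNReal.ofReal d := by simp [Real.volume_Ico]
    _ = _ := by
      rw [← ENNReal.ofReal_add (by positivity) (by positivity)]
      congr 1
      ring

end Typewriter

section Digits

def tent (x : ℝ) : ℝ := max 0 (min 1 (min (16 * (x - 1 / 4)) (16 * (1 / 2 - x))))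

lemma continuous_tent : Continuous tent := by
  unfold tent
  fun_prop

lemma tent_nonneg (x : ℝ) : 0 ≤ tent x := le_max_left _ _

lemma tent_le_one (x : ℝ) : tent x ≤ 1 := max_le zero_le_one (min_le_left _ _)

lemma tent_eq_zero {x : ℝ} (hx : x ∉ Ioo (1 / 4 : ℝ) (1 / 2)) : tent x = 0 := by
  simp only [mem_Ioo, not_and_or, not_lt] at hx
  refine max_eq_left (min_le_of_right_le ?_)
  rcases hx with hx | hx
  · exact min_le_of_left_le (by linarith)
  · exact min_le_of_right_le (by linarith)

lemma mem_Ioo_of_tent_ne_zero {x : ℝ} (hx : tent x ≠ 0) : x ∈ Ioo (1 / 4 : ℝ) (1 / 2) :=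
  not_imp_comm.1 tent_eq_zero hx

lemma tent_eq_one {x : ℝ} (hx : x ∈ Icc (5 / 16 : ℝ) (7 / 16)) : tent x = 1 := by
  obtain ⟨h1, h2⟩ := hx
  rw [tent, min_eq_left (le_min (by linarith) (by linarith)), max_eq_right zero_le_one]

def digitBump (n : ℕ) (t : ℝ) : ℝ := tent (Int.fract (4 ^ n * t))

lemma continuous_digitBump (n : ℕ) : Continuous (digitBump n) :=
  (continuous_tent.continuousOn.comp_fract'' (by rw [tent_eq_zero, tent_eq_zero] <;> norm_num)).comp
    (continuous_const_mul _)

lemma abs_digitBump_le_one (n : ℕ) (t : ℝ) : |digitBump n t| ≤ 1 :=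
  abs_le.2 ⟨(neg_nonpos.2 zero_le_one).trans (tent_nonneg _), tent_le_one _⟩

/-- The `(n+1)`-st base-4 digit of `t` is `1`. -/
def IsDigitOne (n : ℕ) (t : ℝ) : Prop := Int.fract (4 ^ n * t) ∈ Ico (1 / 4 : ℝ) (1 / 2)

lemma isDigitOne_iff_floor {n : ℕ} {t : ℝ} :
    IsDigitOne n t ↔ ⌊4 ^ (n + 1) * t⌋ = 4 * ⌊4 ^ n * t⌋ + 1 := by
  have hx := Int.floor_add_fract (4 ^ n * t)
  rw [IsDigitOne, Int.floor_eq_iff, show (4 : ℝ) ^ (n + 1) * t = 4 * (4 ^ n * t) by ring]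
  push_cast
  constructor <;> rintro ⟨h1, h2⟩ <;> constructor <;> linarith

lemma IsDigitOne.of_digitBump_ne_zero {n : ℕ} {t : ℝ} (h : digitBump n t ≠ 0) : IsDigitOne n t :=
  Ioo_subset_Ico_self (mem_Ioo_of_tent_ne_zero h)

lemma pow_mul_ne_intCast_of_digitBump_ne_zero {n : ℕ} {t : ℝ} (h : digitBump n t ≠ 0) (z : ℤ) :
    4 ^ n * t ≠ z := by
  intro hz
  have := mem_Ioo_of_tent_ne_zero h
  rw [hz, Int.fract_intCast] at this
  norm_num at this

lemma pow_mul_ne_intCast_of_le {n i : ℕ} {t : ℝ} (h : ∀ z : ℤ, 4 ^ n * t ≠ z) (hi : i ≤ n)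
    (z : ℤ) : 4 ^ i * t ≠ z := by
  intro hz
  apply h (4 ^ (n - i) * z)
  push_cast
  rw [← hz, ← mul_assoc, ← pow_add, Nat.sub_add_cancel hi]

lemma eventually_floor_eq {x : ℝ} (h : ∀ z : ℤ, x ≠ z) : ∀ᶠ y in 𝓝 x, ⌊y⌋ = ⌊x⌋ := by
  have hlt : (⌊x⌋ : ℝ) < x := (Int.floor_le x).lt_of_ne (h _).symm
  filter_upwards [Ioo_mem_nhds hlt (Int.lt_floor_add_one x)] with y hy
  exact Int.floor_eq_iff.2 ⟨hy.1.le, hy.2⟩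

lemma eventually_isDigitOne_iff {n : ℕ} {t : ℝ} (h : ∀ z : ℤ, 4 ^ (n + 1) * t ≠ z) :
    ∀ᶠ s in 𝓝 t, IsDigitOne n s ↔ IsDigitOne n t := by
  have hc (k : ℕ) : Tendsto (fun s => (4 : ℝ) ^ k * s) (𝓝 t) (𝓝 (4 ^ k * t)) :=
    (continuous_const_mul _).tendsto t
  filter_upwards [(hc (n + 1)).eventually (eventually_floor_eq h),
    (hc n).eventually (eventually_floor_eq (pow_mul_ne_intCast_of_le h n.le_succ))] with s h1 h2
  simp only [isDigitOne_iff_floor, h1, h2]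

instance (n : ℕ) (t : ℝ) : Decidable (IsDigitOne n t) := inferInstanceAs (Decidable (_ ∈ _))

def digitOneCount (n : ℕ) (t : ℝ) : ℕ := ((Finset.range n).filter (IsDigitOne · t)).card

lemma digitOneCount_le (n : ℕ) (t : ℝ) : digitOneCount n t ≤ n :=
  (Finset.card_filter_le _ _).trans (Finset.card_range n).le

lemma digitOneCount_lt_of_lt {n n' : ℕ} {t : ℝ} (hn : n < n') (h : IsDigitOne n t) :
    digitOneCount n t < digitOneCount n' t := by
  refine Finset.card_lt_card ⟨Finset.filter_subset_filter _ (Finset.range_subset_range.2 hn.le),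
    fun hsub => ?_⟩
  have := hsub (Finset.mem_filter.2 ⟨Finset.mem_range.2 hn, h⟩)
  simp at this

lemma eventually_digitOneCount_eq {n : ℕ} {t : ℝ} (h : ∀ z : ℤ, 4 ^ n * t ≠ z) :
    ∀ᶠ s in 𝓝 t, digitOneCount n s = digitOneCount n t := by
  have hall : ∀ᶠ s in 𝓝 t, ∀ i ∈ Finset.range n, IsDigitOne i s ↔ IsDigitOne i t :=
    (Finset.eventually_all _).2 fun i hi =>
      eventually_isDigitOne_iff (pow_mul_ne_intCast_of_le h (Finset.mem_range.1 hi))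
  filter_upwards [hall] with s hs
  unfold digitOneCount
  rw [Finset.filter_congr hs]

lemma notMem_frontier_setOf_eq {α β : Type*} [TopologicalSpace α] {c : α → β} {a : α}
    (h : ∀ᶠ x in 𝓝 a, c x = c a) (k : β) : a ∉ frontier {x | c x = k} := by
  rw [← mem_compl_iff, compl_frontier_eq_union_interior]
  by_cases hk : c a = k
  · exact Or.inl (mem_interior_iff_mem_nhds.2 (h.mono fun x hx => hx.trans hk))
  · exact Or.inr (mem_interior_iff_mem_nhds.2 (h.mono fun x hx => by simp [hx, hk]))

/-- Continuous because `digitOneCount n` is locally constant wherever `digitBump n` does not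
vanish. -/
def levelBump (n k : ℕ) : C(Icc (0 : ℝ) 1, ℝ) where
  toFun x := if digitOneCount n x = k then digitBump n x else 0
  continuous_toFun := by
    refine ((continuous_digitBump n).if (p := fun t => digitOneCount n t = k)
      (fun t ht => ?_) continuous_const).comp continuous_subtype_val
    by_contra h
    exact notMem_frontier_setOf_eq
      (eventually_digitOneCount_eq (pow_mul_ne_intCast_of_digitBump_ne_zero h)) k ht

lemma levelBump_apply (n k : ℕ) (x : Icc (0 : ℝ) 1) :
    levelBump n k x = if digitOneCount n x = k then digitBump n x else 0 := rfl

lemma norm_levelBump_le (n k : ℕ) : ‖levelBump n k‖ ≤ 1 := by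
  refine (ContinuousMap.norm_le _ zero_le_one).2 fun x => ?_
  rw [levelBump_apply]
  split_ifs
  · exact abs_digitBump_le_one n x
  · simp

lemma levelBump_ne_zero {n k : ℕ} {x : Icc (0 : ℝ) 1} (h : levelBump n k x ≠ 0) :
    digitOneCount n x = k ∧ digitBump n x ≠ 0 := by
  rw [levelBump_apply] at h
  split_ifs at h with hk
  · exact ⟨hk, h⟩
  · exact absurd rfl h

lemma pairwise_disjoint_support_levelBump_left (n : ℕ) :
    Pairwise fun k k' =>
      Disjoint (Function.support (levelBump n k)) (Function.support (levelBump n k')) :=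
  fun _ _ hkk' => Set.disjoint_left.2 fun _ hx hx' =>
    hkk' ((levelBump_ne_zero hx).1.symm.trans (levelBump_ne_zero hx').1)

lemma pairwise_disjoint_support_levelBump_right (k : ℕ) :
    Pairwise fun n n' =>
      Disjoint (Function.support (levelBump n k)) (Function.support (levelBump n' k)) := by
  intro n n' hnn'
  refine Set.disjoint_left.2 fun x hx hx' => ?_
  obtain ⟨hk, hb⟩ := levelBump_ne_zero hx
  obtain ⟨hk', hb'⟩ := levelBump_ne_zero hx'
  rcases hnn'.lt_or_gt with h | h
  · exact (digitOneCount_lt_of_lt h (.of_digitBump_ne_zero hb)).ne (hk.trans hk'.symm)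
  · exact (digitOneCount_lt_of_lt h (.of_digitBump_ne_zero hb')).ne (hk'.trans hk.symm)

end Digits

section Sequence

def counterexampleSeq (n : ℕ) (ω : ℝ) : C(Icc (0 : ℝ) 1, ℝ) :=
  ∑ k ∈ Finset.range (n + 1), (typewriterArc k).indicator (1 : ℝ → ℝ) ω • levelBump n k

lemma counterexampleSeq_apply (n : ℕ) (ω : ℝ) (x : Icc (0 : ℝ) 1) :
    counterexampleSeq n ω x =
      (typewriterArc (digitOneCount n x)).indicator 1 ω * digitBump n x := by
  simp only [counterexampleSeq, ContinuousMap.sum_apply, ContinuousMap.smul_apply, levelBump_apply,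
    smul_eq_mul, mul_ite, mul_zero]
  rw [Finset.sum_ite_eq, if_pos (Finset.mem_range.2 (Nat.lt_succ_of_le (digitOneCount_le n x)))]

lemma norm_counterexampleSeq_le (n : ℕ) (ω : ℝ) : ‖counterexampleSeq n ω‖ ≤ 1 := by
  refine (ContinuousMap.norm_le _ zero_le_one).2 fun x => ?_
  rw [counterexampleSeq_apply, norm_mul]
  refine mul_le_one₀ ?_ (norm_nonneg _) (abs_digitBump_le_one n x)
  exact (norm_indicator_le_norm_self _ _).trans (by simp)

lemma aestronglyMeasurable_counterexampleSeq (n : ℕ) :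
    AEStronglyMeasurable (counterexampleSeq n) μ01 :=
  Finset.aestronglyMeasurable_fun_sum (Finset.range (n + 1)) fun k _ =>
    (measurable_const.indicator (measurableSet_typewriterArc k)).aestronglyMeasurable.smul_const _

lemma eLpNorm_apply_counterexampleSeq_le (φ : C(Icc (0 : ℝ) 1, ℝ) →L[ℝ] ℝ) (n : ℕ) :
    eLpNorm (fun ω => φ (counterexampleSeq n ω)) 1 μ01 ≤
      ENNReal.ofReal (∑ k ∈ Finset.range (n + 1), |φ (levelBump n k)| * (2 / ((k : ℝ) + 1))) := by
  have hφ : (fun ω => φ (counterexampleSeq n ω)) =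
      ∑ k ∈ Finset.range (n + 1), (typewriterArc k).indicator fun _ : ℝ => φ (levelBump n k) := by
    ext ω
    simp only [counterexampleSeq, map_sum, map_smul, Finset.sum_apply, smul_eq_mul]
    refine Finset.sum_congr rfl fun k _ => ?_
    by_cases hω : ω ∈ typewriterArc k <;> simp [hω]
  rw [hφ, ENNReal.ofReal_sum_of_nonneg fun k _ => by positivity]
  refine (eLpNorm_sum_le (fun k _ => aestronglyMeasurable_const.indicator
    (measurableSet_typewriterArc k)) le_rfl).trans (Finset.sum_le_sum fun k _ => ?_)
  rw [eLpNorm_indicator_const (measurableSet_typewriterArc k) one_ne_zero one_ne_top,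
    ENNReal.ofReal_mul (abs_nonneg _), ← Real.enorm_eq_ofReal_abs]
  simp only [ENNReal.toReal_one, div_one, ENNReal.rpow_one]
  gcongr
  exact μ01_typewriterArc_le k

lemma scalarInMeasure_counterexampleSeq : ScalarInMeasure counterexampleSeq 0 := by
  intro φ
  refine tendstoInMeasure_of_tendsto_eLpNorm one_ne_zero
    (fun n => φ.continuous.comp_aestronglyMeasurable (aestronglyMeasurable_counterexampleSeq n))
    (φ.continuous.comp_aestronglyMeasurable aestronglyMeasurable_const) ?_
  have hlim := tendsto_sum_mul_of_tendsto_zero (a := fun n k => |φ (levelBump n k)|)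
    (b := fun k => 2 / ((k : ℝ) + 1)) (s := fun n => Finset.range (n + 1))
    (fun _ _ => abs_nonneg _)
    (fun k => ContinuousMap.tendsto_abs_apply_of_pairwise_disjoint φ
      (fun n => norm_levelBump_le n k)
      (pairwise_disjoint_support_levelBump_right k))
    (fun n => ContinuousMap.sum_abs_apply_le_opNorm φ (norm_levelBump_le n)
      (pairwise_disjoint_support_levelBump_left n) _)
    (fun k => by positivity)
    (by simpa [div_eq_mul_inv] using tendsto_one_div_add_atTop_nhds_zero_nat.const_mul (2 : ℝ))
  refine tendsto_of_tendsto_of_tendsto_of_le_of_le tendsto_const_nhds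
    (by simpa using ENNReal.tendsto_ofReal hlim) (fun _ => zero_le) fun n => ?_
  simpa [Pi.sub_def] using eLpNorm_apply_counterexampleSeq_le φ n

end Sequence

section AdaptedPoint

variable {m : ℕ → ℕ}

/-- Its base-4 expansion has the digits `1, 2` in the places `m j + 1, m j + 2` and `0`
elsewhere (`3/8 = 0.12` in base 4). -/
def adaptedPoint (m : ℕ → ℕ) : ℝ := ∑' j, 3 / 8 / 4 ^ m j

lemma add_two_mul_le (hm : ∀ j, m j + 2 ≤ m (j + 1)) (i j : ℕ) : m i + 2 * j ≤ m (j + i) := by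
  induction j with
  | zero => simp
  | succ j ih =>
    have := hm (j + i)
    rw [show j + 1 + i = j + i + 1 by omega]
    omega

lemma pow_mul_div_pow_le (hm : ∀ j, m j + 2 ≤ m (j + 1)) {n d i : ℕ} (h : n + d ≤ m i)
    (j : ℕ) : 4 ^ n * (3 / 8 / 4 ^ m (j + i)) ≤ 3 / 8 / 4 ^ d * (1 / 16 : ℝ) ^ j := by
  obtain ⟨r, hr⟩ :=
    Nat.exists_eq_add_of_le ((Nat.add_le_add_right h (2 * j)).trans (add_two_mul_le hm i j))
  have h4r : (1 : ℝ) ≤ 4 ^ r := one_le_pow₀ (by norm_num)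
  calc (4 : ℝ) ^ n * (3 / 8 / 4 ^ m (j + i)) = 3 / 8 / 4 ^ d * (1 / 16 : ℝ) ^ j / 4 ^ r := by
        rw [hr, pow_add, pow_add, pow_add, pow_mul]
        field_simp
        rw [← mul_pow]
        norm_num
    _ ≤ _ := div_le_self (by positivity) h4r

lemma summable_adaptedPoint (hm : ∀ j, m j + 2 ≤ m (j + 1)) :
    Summable fun j => (3 : ℝ) / 8 / 4 ^ m j :=
  Summable.of_nonneg_of_le (fun _ => by positivity)
    (fun j => by simpa using pow_mul_div_pow_le hm (n := 0) (d := 0) (i := 0) (Nat.zero_le _) j)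
    ((summable_geometric_of_lt_one (r := (1 / 16 : ℝ)) (by norm_num) (by norm_num)).mul_left
      (3 / 8 / 4 ^ 0))

lemma pow_mul_tail_le (hm : ∀ j, m j + 2 ≤ m (j + 1)) {n d i : ℕ} (h : n + d ≤ m i) :
    4 ^ n * ∑' j, (3 : ℝ) / 8 / 4 ^ m (j + i) ≤ 2 / 5 / 4 ^ d := by
  rw [← tsum_mul_left]
  calc _ ≤ ∑' j : ℕ, 3 / 8 / 4 ^ d * (1 / 16 : ℝ) ^ j :=
        Summable.tsum_le_tsum (pow_mul_div_pow_le hm h)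
          (((summable_nat_add_iff i).2 (summable_adaptedPoint hm)).mul_left _)
          ((summable_geometric_of_lt_one (by norm_num) (by norm_num)).mul_left _)
    _ = 2 / 5 / 4 ^ d := by
        rw [tsum_mul_left, tsum_geometric_of_lt_one (by norm_num) (by norm_num)]
        ring

lemma pow_mul_tail_nonneg (n i : ℕ) : 0 ≤ 4 ^ n * ∑' j, (3 : ℝ) / 8 / 4 ^ m (j + i) :=
  mul_nonneg (by positivity) (tsum_nonneg fun _ => by positivity)

lemma exists_pow_mul_adaptedPoint_eq_intCast_add (hm : ∀ j, m j + 2 ≤ m (j + 1)) {n i : ℕ}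
    (hi : ∀ j < i, m j + 2 ≤ n) :
    ∃ z : ℤ, 4 ^ n * adaptedPoint m = z + 4 ^ n * ∑' j, (3 : ℝ) / 8 / 4 ^ m (j + i) := by
  refine ⟨∑ j ∈ Finset.range i, 6 * 4 ^ (n - (m j + 2)), ?_⟩
  rw [adaptedPoint, ← (summable_adaptedPoint hm).sum_add_tsum_nat_add i, mul_add, Finset.mul_sum]
  push_cast
  congr 1
  refine Finset.sum_congr rfl fun j hj => ?_
  obtain ⟨r, hr⟩ := Nat.exists_eq_add_of_le (hi j (Finset.mem_range.1 hj))
  rw [hr, Nat.add_sub_cancel_left, pow_add, pow_add]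
  field_simp
  norm_num

lemma tsum_tail_eq_add (hm : ∀ j, m j + 2 ≤ m (j + 1)) (i : ℕ) :
    ∑' j, (3 : ℝ) / 8 / 4 ^ m (j + i) =
      3 / 8 / 4 ^ m i + ∑' j, (3 : ℝ) / 8 / 4 ^ m (j + (i + 1)) := by
  rw [((summable_nat_add_iff i).2 (summable_adaptedPoint hm)).tsum_eq_zero_add]
  simp only [zero_add, add_assoc, add_comm 1 i]

lemma exists_pow_add_mul_adaptedPoint_eq (hm : ∀ j, m j + 2 ≤ m (j + 1)) (i : ℕ) {r : ℕ}
    (hr : r ≤ 1) : ∃ z : ℤ, ∃ e ∈ Icc (0 : ℝ) (2 / 5 / 4 ^ (2 - r)),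
      4 ^ (m i + r) * adaptedPoint m = z + 3 / 8 * 4 ^ r + e := by
  obtain ⟨z, hz⟩ := exists_pow_mul_adaptedPoint_eq_intCast_add hm (n := m i + r) (i := i)
    fun j hj => by
      have := add_two_mul_le hm j (i - j)
      rw [Nat.sub_add_cancel hj.le] at this
      omega
  refine ⟨z, 4 ^ (m i + r) * ∑' j, (3 : ℝ) / 8 / 4 ^ m (j + (i + 1)),
    ⟨pow_mul_tail_nonneg _ _, pow_mul_tail_le hm (by have := hm i; omega)⟩, ?_⟩
  rw [hz, tsum_tail_eq_add hm i, mul_add, add_assoc, pow_add]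
  field_simp

lemma fract_pow_mul_adaptedPoint_mem (hm : ∀ j, m j + 2 ≤ m (j + 1)) (i : ℕ) :
    Int.fract (4 ^ m i * adaptedPoint m) ∈ Icc (3 / 8 : ℝ) (2 / 5) := by
  obtain ⟨z, e, ⟨he0, he1⟩, h⟩ := exists_pow_add_mul_adaptedPoint_eq hm i (r := 0) zero_le_one
  norm_num at he1 h
  rw [h, add_assoc, Int.fract_intCast_add, Int.fract_eq_self.2 ⟨by linarith, by linarith⟩]
  constructor <;> linarith

lemma fract_pow_succ_mul_adaptedPoint_mem (hm : ∀ j, m j + 2 ≤ m (j + 1)) (i : ℕ) :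
    Int.fract (4 ^ (m i + 1) * adaptedPoint m) ∈ Icc (1 / 2 : ℝ) (3 / 5) := by
  obtain ⟨z, e, ⟨he0, he1⟩, h⟩ := exists_pow_add_mul_adaptedPoint_eq hm i le_rfl
  norm_num at he1
  rw [h, show (z : ℝ) + 3 / 8 * 4 ^ 1 + e = (z + 1 : ℤ) + (1 / 2 + e) by push_cast; ring,
    Int.fract_intCast_add, Int.fract_eq_self.2 ⟨by linarith, by linarith⟩]
  constructor <;> linarith

lemma fract_pow_mul_adaptedPoint_mem_of_ne (hm : ∀ j, m j + 2 ≤ m (j + 1)) {n : ℕ}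
    (hn : ∀ i, m i ≠ n ∧ m i + 1 ≠ n) :
    Int.fract (4 ^ n * adaptedPoint m) ∈ Icc (0 : ℝ) (1 / 10) := by
  have hex : ∃ i, n ≤ m i := ⟨n, by have := add_two_mul_le hm 0 n; simp at this; omega⟩
  have hni : n + 1 ≤ m (Nat.find hex) := (Nat.find_spec hex).lt_of_ne (hn _).1.symm
  obtain ⟨z, hz⟩ := exists_pow_mul_adaptedPoint_eq_intCast_add hm (n := n) (i := Nat.find hex)
    fun j hj => by
      have := Nat.find_min hex hj
      have := (hn j).2
      omega
  have he := pow_mul_tail_le hm hni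
  have he0 := pow_mul_tail_nonneg (m := m) n (Nat.find hex)
  norm_num at he
  rw [hz, Int.fract_intCast_add, Int.fract_eq_self.2 ⟨he0, by linarith⟩]
  exact ⟨he0, he⟩

lemma isDigitOne_adaptedPoint_iff (hm : ∀ j, m j + 2 ≤ m (j + 1)) (n : ℕ) :
    IsDigitOne n (adaptedPoint m) ↔ n ∈ Set.range m := by
  refine ⟨fun hn => ?_, ?_⟩
  · by_contra hnm
    simp only [Set.mem_range, not_exists] at hnm
    by_cases h : ∃ i, m i + 1 = n
    · obtain ⟨i, rfl⟩ := h
      exact (fract_pow_succ_mul_adaptedPoint_mem hm i).1.not_gt hn.2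
    · push Not at h
      have := (fract_pow_mul_adaptedPoint_mem_of_ne hm fun i => ⟨hnm i, h i⟩).2
      linarith [hn.1]
  · rintro ⟨i, rfl⟩
    obtain ⟨h1, h2⟩ := fract_pow_mul_adaptedPoint_mem hm i
    exact ⟨by linarith, by linarith⟩

lemma digitBump_adaptedPoint (hm : ∀ j, m j + 2 ≤ m (j + 1)) (i : ℕ) :
    digitBump (m i) (adaptedPoint m) = 1 := by
  obtain ⟨h1, h2⟩ := fract_pow_mul_adaptedPoint_mem hm i
  exact tent_eq_one ⟨by linarith, by linarith⟩

lemma digitOneCount_adaptedPoint (hm : ∀ j, m j + 2 ≤ m (j + 1)) (j : ℕ) :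
    digitOneCount (m j) (adaptedPoint m) = j := by
  have hmono : StrictMono m := strictMono_nat_of_lt_succ fun j => by have := hm j; omega
  have hdigits : (Finset.range (m j)).filter (IsDigitOne · (adaptedPoint m)) =
      (Finset.range j).image m := by
    ext n
    simp only [Finset.mem_filter, Finset.mem_range, Finset.mem_image,
      isDigitOne_adaptedPoint_iff hm, Set.mem_range]
    constructor
    · rintro ⟨hn, i, rfl⟩
      exact ⟨i, hmono.lt_iff_lt.1 hn, rfl⟩
    · rintro ⟨i, hi, rfl⟩
      exact ⟨hmono.lt_iff_lt.2 hi, i, rfl⟩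
  rw [digitOneCount, hdigits, Finset.card_image_of_injective _ hmono.injective, Finset.card_range]

lemma adaptedPoint_mem_Icc (hm : ∀ j, m j + 2 ≤ m (j + 1)) : adaptedPoint m ∈ Icc (0 : ℝ) 1 := by
  refine ⟨tsum_nonneg fun _ => by positivity, ?_⟩
  have := pow_mul_tail_le hm (n := 0) (d := 0) (i := 0) (Nat.zero_le _)
  simp only [pow_zero, one_mul, add_zero] at this
  exact this.trans (by norm_num)

lemma counterexampleSeq_apply_adaptedPoint (hm : ∀ j, m j + 2 ≤ m (j + 1)) (j : ℕ) (ω : ℝ) :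
    counterexampleSeq (m j) ω ⟨adaptedPoint m, adaptedPoint_mem_Icc hm⟩ =
      (typewriterArc j).indicator 1 ω := by
  rw [counterexampleSeq_apply, digitOneCount_adaptedPoint hm, digitBump_adaptedPoint hm, mul_one]

end AdaptedPoint

instance inst_s8 : IsProbabilityMeasure μ01 := ⟨by simp [μ01]⟩

theorem stmt_8 :
    ∃ f : ℕ → ℝ → C(Set.Icc (0:ℝ) 1, ℝ),
      (∀ n, AEStronglyMeasurable (f n) μ01) ∧
      (∀ n, ∀ᵐ ω ∂μ01, ‖f n ω‖ ≤ 1) ∧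
      ScalarInMeasure f 0 ∧
      ∀ φ : ℕ → ℕ, StrictMono φ →
        ¬ ScalarAE (fun k => f (φ k)) (0 : ℝ → C(Set.Icc (0:ℝ) 1, ℝ)) := by
  refine ⟨counterexampleSeq, aestronglyMeasurable_counterexampleSeq,
    fun n => ae_of_all _ (norm_counterexampleSeq_le n), scalarInMeasure_counterexampleSeq,
    fun ψ hψ hae => ?_⟩
  -- pass to the even terms, so that consecutive indices differ by at least two
  set m := fun j => ψ (2 * j)
  have hm : ∀ j, m j + 2 ≤ m (j + 1) := fun j => by
    have h1 := hψ (show 2 * j < 2 * j + 1 by omega)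
    have h2 := hψ (show 2 * j + 1 < 2 * (j + 1) by omega)
    simp only [m]
    omega
  obtain ⟨ω, hω⟩ :=
    (hae (ContinuousMap.evalCLM ℝ ⟨adaptedPoint m, adaptedPoint_mem_Icc hm⟩)).exists
  simp only [Pi.zero_apply, map_zero] at hω
  refine not_tendsto_indicator_typewriterArc ω
    ((hω.comp (strictMono_mul_left_of_pos two_pos).tendsto_atTop).congr fun j => ?_)
  exact counterexampleSeq_apply_adaptedPoint hm j ω
end
end

section
/- Let X be a real Banach space. The following are equivalent: (1) X is weakly sequentially complete, i.e., for every sequence (x_n) in X such that (x*(x_n)) converges in ℝ for every x* ∈ X* there exists x ∈ X with x*(x_n) → x*(x) for all x* ∈ X*; (2) every sequence (f_n) in L₀(X) such that (x*∘f_n) is a Cauchy sequence in the L_∞(μ)-norm for every x* ∈ X* converges scalarly in L_∞ to some f ∈ L₀(X). -/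
open MeasureTheory Filter Topology ENNReal Set

noncomputable section

/-!
Both directions rest on the essential range of a function `d` with separable range: almost every
value `d ω` lies in it, and it is contained in every closed set that `d` hits almost everywhere.
Applied to the closed sets `{y | ‖φ y‖ ≤ ‖φ ∘ d‖_∞}` for all `φ` at once, it turns scalar
`L_∞`-Cauchyness of `(f n)` into weak Cauchyness of `(f n ω)` for a.e. `ω`; weak sequential
completeness supplies the weak limits `g ω`, and `g` is strongly measurable by Pettis' theorem,
as it takes values in the closed span of the separable ranges of the `f n`. Conversely, for a
weakly Cauchy `(x n)`, the scalar limit `g` of the constant functions `x n` has `φ ∘ g` a.e. equal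
to `lim φ (x n)` for every `φ`, so any single point of the essential range of `g` is a weak limit.
-/

section Pettis

variable {𝕜 E : Type*} [RCLike 𝕜] [NormedAddCommGroup E] [NormedSpace 𝕜 E]

theorem exists_norming_seq {s : Set E} (hs : TopologicalSpace.IsSeparable s) :
    ∃ Φ : ℕ → StrongDual 𝕜 E, (∀ k, ‖Φ k‖ ≤ 1) ∧ ∀ z ∈ closure s, ‖z‖ = ⨆ k, ‖Φ k z‖ := by
  obtain ⟨c, hc, hsc⟩ := hs
  obtain ⟨t, ht⟩ := (hc.insert 0).exists_eq_range (insert_nonempty 0 c)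
  choose Φ hΦ1 hΦt using fun k => exists_dual_vector'' 𝕜 (t k)
  have hle : ∀ k y, ‖Φ k y‖ ≤ ‖y‖ := fun k y =>
    ((Φ k).le_opNorm y).trans (mul_le_of_le_one_left (norm_nonneg y) (hΦ1 k))
  refine ⟨Φ, hΦ1, fun z hz => le_antisymm (le_of_forall_pos_lt_add fun ε hε => ?_)
    (ciSup_le fun k => hle k z)⟩
  have hzt : z ∈ closure (range t) :=
    ht ▸ closure_mono (subset_insert 0 c) (closure_minimal hsc isClosed_closure hz)
  obtain ⟨_, ⟨k, rfl⟩, hk⟩ := Metric.mem_closure_iff.1 hzt (ε / 2) (half_pos hε)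
  rw [dist_eq_norm] at hk
  have htk : ‖t k‖ ≤ ‖Φ k z‖ + ‖z - t k‖ := by
    calc ‖t k‖ = ‖Φ k (t k)‖ := by rw [hΦt, RCLike.norm_ofReal, abs_norm]
      _ = ‖Φ k z - Φ k (z - t k)‖ := by rw [map_sub, _root_.sub_sub_cancel]
      _ ≤ ‖Φ k z‖ + ‖z - t k‖ := by grw [norm_sub_le, hle k (z - t k)]
  have hbdd : BddAbove (range fun k => ‖Φ k z‖) := ⟨‖z‖, forall_mem_range.2 fun k => hle k z⟩
  calc ‖z‖ ≤ ‖t k‖ + ‖z - t k‖ := norm_le_insert' z (t k)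
    _ < ‖Φ k z‖ + ε := by linarith
    _ ≤ (⨆ k, ‖Φ k z‖) + ε := by grw [le_ciSup hbdd k]

theorem measurable_of_measurable_dist {α β : Type*} [MeasurableSpace α] [PseudoMetricSpace β]
    [MeasurableSpace β] [BorelSpace β] [SecondCountableTopology β] {g : α → β}
    (hg : ∀ x, Measurable fun ω => dist (g ω) x) : Measurable g := by
  refine measurable_of_isOpen fun U hU => ?_
  obtain ⟨T, hTc, hTS, hTU⟩ := TopologicalSpace.isOpen_sUnion_countable
    {b | ∃ x r, b = Metric.ball x r ∧ b ⊆ U} (by rintro _ ⟨x, r, rfl, -⟩; exact Metric.isOpen_ball)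
  have hU' : U = ⋃₀ T := by
    rw [hTU]
    refine Subset.antisymm (fun y hy => ?_) (sUnion_subset fun b ⟨_, _, _, hb⟩ => hb)
    obtain ⟨r, hr, hrU⟩ := Metric.isOpen_iff.1 hU y hy
    exact ⟨_, ⟨y, r, rfl, hrU⟩, Metric.mem_ball_self hr⟩
  rw [hU', preimage_sUnion]
  refine MeasurableSet.biUnion hTc fun b hb => ?_
  obtain ⟨x, r, rfl, -⟩ := hTS hb
  exact hg x measurableSet_Iio

theorem stronglyMeasurable_of_measurable_dual_comp {α : Type*} [MeasurableSpace α] {g : α → E}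
    (hsep : TopologicalSpace.IsSeparable (range g))
    (hg : ∀ φ : StrongDual 𝕜 E, Measurable fun ω => φ (g ω)) : StronglyMeasurable g := by
  borelize E
  let W := (Submodule.span 𝕜 (range g)).topologicalClosure
  have hW : (W : Set E) = closure (Submodule.span 𝕜 (range g)) :=
    Submodule.topologicalClosure_coe _
  obtain ⟨Φ, -, hΦ⟩ := exists_norming_seq (𝕜 := 𝕜) (hsep.span (R := 𝕜))
  have hgW : ∀ ω, g ω ∈ W := fun ω =>
    Submodule.le_topologicalClosure _ (Submodule.subset_span ⟨ω, rfl⟩)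
  have : TopologicalSpace.SeparableSpace W := (hW ▸ (hsep.span (R := 𝕜)).closure).separableSpace
  let g' : α → W := fun ω => ⟨g ω, hgW ω⟩
  have hg' : Measurable g' := measurable_of_measurable_dist fun x => by
    have hdist : ∀ ω, dist (g' ω) x = ⨆ k, ‖Φ k (g ω) - Φ k x‖ := fun ω => by
      rw [Subtype.dist_eq, dist_eq_norm, hΦ _ (hW ▸ W.sub_mem (hgW ω) x.2)]
      simp only [map_sub, g']
    simp only [hdist]
    exact Measurable.iSup fun k => ((hg (Φ k)).sub_const _).norm
  exact stronglyMeasurable_iff_measurable_separable.2 ⟨measurable_subtype_coe.comp hg', hsep⟩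

end Pettis

theorem mem_of_forall_dual_tendsto {F : Type*} [NormedAddCommGroup F] [NormedSpace ℝ F]
    {s : Set F} (hs : Convex ℝ s) (hsc : IsClosed s) {x : ℕ → F} {y : F} (hx : ∀ n, x n ∈ s)
    (hy : ∀ φ : StrongDual ℝ F, Tendsto (fun n => φ (x n)) atTop (𝓝 (φ y))) : y ∈ s := by
  by_contra hys
  obtain ⟨φ, u, hφs, hφy⟩ := geometric_hahn_banach_closed_point hs hsc hys
  exact (le_of_tendsto' (hy φ) fun n => (hφs _ (hx n)).le).not_gt hφy

section EssRange

variable {α E : Type*} [MeasurableSpace α] {μ : Measure α}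

def essRange [PseudoMetricSpace E] (μ : Measure α) (d : α → E) : Set E :=
  {x | ∀ ε > 0, μ (d ⁻¹' Metric.ball x ε) ≠ 0}

theorem essRange_subset_of_ae_mem [PseudoMetricSpace E] {d : α → E} {F : Set E}
    (hF : IsClosed F) (h : ∀ᵐ ω ∂μ, d ω ∈ F) : essRange μ d ⊆ F := by
  intro x hx
  by_contra hxF
  obtain ⟨ε, hε, hball⟩ := Metric.isOpen_iff.1 hF.isOpen_compl x hxF
  exact hx ε hε (measure_mono_null (fun ω hω => hball hω) (ae_iff.1 h))

theorem ae_mem_essRange [PseudoMetricSpace E] {d : α → E} {t : Set E}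
    (ht : TopologicalSpace.IsSeparable t) (hdt : ∀ᵐ ω ∂μ, d ω ∈ t) :
    ∀ᵐ ω ∂μ, d ω ∈ essRange μ d := by
  obtain ⟨c, hc, htc⟩ := ht
  -- the null balls centred in `c` with rational radii cover every point outside `essRange μ d`
  let S : Set (E × ℚ) := {p | p.1 ∈ c ∧ μ (d ⁻¹' Metric.ball p.1 p.2) = 0}
  have hS : S.Countable :=
    (hc.prod countable_univ).mono fun p hp => mk_mem_prod hp.1 (mem_univ p.2)
  have hnull : ∀ᵐ ω ∂μ, ω ∉ ⋃ p ∈ S, d ⁻¹' Metric.ball p.1 p.2 :=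
    measure_eq_zero_iff_ae_notMem.1 ((measure_biUnion_null_iff hS).2 fun p hp => hp.2)
  filter_upwards [hdt, hnull] with ω hωt hω ε hε h0
  obtain ⟨x, hxc, hx⟩ := Metric.mem_closure_iff.1 (htc hωt) (ε / 2) (half_pos hε)
  obtain ⟨q, hxq, hqε⟩ := exists_rat_btwn hx
  have hsub : Metric.ball x q ⊆ Metric.ball (d ω) ε :=
    Metric.ball_subset_ball' (by rw [dist_comm]; linarith)
  have hxqS : (x, (q : ℚ)) ∈ S := ⟨hxc, measure_mono_null (preimage_mono hsub) h0⟩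
  exact hω (mem_biUnion hxqS (by simpa [dist_comm] using hxq))

theorem ae_forall_dual_enorm_le_eLpNorm_top {𝕜 : Type*} [RCLike 𝕜] [NormedAddCommGroup E]
    [NormedSpace 𝕜 E] {d : α → E} (hd : AEStronglyMeasurable d μ) :
    ∀ᵐ ω ∂μ, ∀ φ : StrongDual 𝕜 E, ‖φ (d ω)‖ₑ ≤ eLpNorm (fun ω => φ (d ω)) ⊤ μ := by
  obtain ⟨t, ht, hdt⟩ := hd.isSeparable_ae_range
  filter_upwards [ae_mem_essRange ht hdt] with ω hω φ
  refine essRange_subset_of_ae_mem (F := {y | ‖φ y‖ₑ ≤ eLpNorm (fun ω => φ (d ω)) ⊤ μ})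
    (isClosed_le (by fun_prop) continuous_const) ?_ hω
  rw [eLpNorm_exponent_top]
  exact ae_le_eLpNormEssSup

end EssRange

section LinftyCauchy

variable {α F : Type*} [MeasurableSpace α] {μ : Measure α} [NormedAddCommGroup F]

def LinftyCauchy (μ : Measure α) (u : ℕ → α → F) : Prop :=
  ∀ ε : ℝ, 0 < ε → ∃ N : ℕ, ∀ n ≥ N, ∀ m ≥ N,
    eLpNorm (fun ω => u n ω - u m ω) ⊤ μ < ENNReal.ofReal ε

theorem CauchySeq.linftyCauchy_const {u : ℕ → F} (hu : CauchySeq u) :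
    LinftyCauchy μ fun n (_ : α) => u n := by
  intro ε hε
  obtain ⟨N, hN⟩ := Metric.cauchySeq_iff.1 hu ε hε
  refine ⟨N, fun n hn m hm => ?_⟩
  rw [eLpNorm_exponent_top]
  refine (eLpNormEssSup_le_of_ae_enorm_bound (ae_of_all _ fun _ => le_rfl)).trans_lt ?_
  rw [← ofReal_norm, ENNReal.ofReal_lt_ofReal_iff hε, ← dist_eq_norm]
  exact hN n hn m hm

theorem LinftyCauchy.cauchySeq {u : ℕ → α → F} (hu : LinftyCauchy μ u) {ω : α}
    (hω : ∀ n m, ‖u n ω - u m ω‖ₑ ≤ eLpNorm (fun ω => u n ω - u m ω) ⊤ μ) :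
    CauchySeq fun n => u n ω := by
  refine Metric.cauchySeq_iff.2 fun ε hε => ?_
  obtain ⟨N, hN⟩ := hu ε hε
  refine ⟨N, fun m hm n hn => ?_⟩
  rw [dist_eq_norm, ← ENNReal.ofReal_lt_ofReal_iff hε, ofReal_norm]
  exact (hω m n).trans_lt (hN m hm n hn)

theorem ae_forall_enorm_le_eLpNorm_top (u : ℕ → α → F) :
    ∀ᵐ ω ∂μ, ∀ n, ‖u n ω‖ₑ ≤ eLpNorm (u n) ⊤ μ := by
  rw [ae_all_iff]
  exact fun n => eLpNorm_exponent_top (f := u n) ▸ ae_le_eLpNormEssSup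

theorem LinftyCauchy.tendsto_eLpNorm_top {u : ℕ → α → F} {v : α → F} (hu : LinftyCauchy μ u)
    (hlim : ∀ᵐ ω ∂μ, Tendsto (fun n => u n ω) atTop (𝓝 (v ω))) :
    Tendsto (fun n => eLpNorm (fun ω => u n ω - v ω) ⊤ μ) atTop (𝓝 0) := by
  have hpt : ∀ᵐ ω ∂μ, ∀ n m, ‖u n ω - u m ω‖ₑ ≤ eLpNorm (fun ω => u n ω - u m ω) ⊤ μ := by
    rw [ae_all_iff]
    exact fun n => ae_forall_enorm_le_eLpNorm_top fun m ω => u n ω - u m ω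
  refine ENNReal.tendsto_nhds_zero.2 fun ε hε => ?_
  obtain ⟨r, -, hr, hrε⟩ := ENNReal.lt_iff_exists_real_btwn.1 hε
  obtain ⟨N, hN⟩ := hu r (ENNReal.ofReal_pos.1 hr)
  filter_upwards [eventually_ge_atTop N] with n hn
  rw [eLpNorm_exponent_top]
  refine (eLpNormEssSup_le_of_ae_enorm_bound ?_).trans hrε.le
  filter_upwards [hpt, hlim] with ω hω hωlim
  refine le_of_tendsto (tendsto_const_nhds.sub hωlim).enorm ?_
  filter_upwards [eventually_ge_atTop N] with m hm using (hω n m).trans (hN n hn m hm).le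

theorem ae_tendsto_of_tendsto_eLpNorm_top {u : ℕ → α → F} {v : α → F}
    (h : Tendsto (fun n => eLpNorm (fun ω => u n ω - v ω) ⊤ μ) atTop (𝓝 0)) :
    ∀ᵐ ω ∂μ, Tendsto (fun n => u n ω) atTop (𝓝 (v ω)) := by
  filter_upwards [ae_forall_enorm_le_eLpNorm_top fun n ω => u n ω - v ω] with ω hω
  exact tendsto_iff_enorm_sub_tendsto_zero.2 <|
    tendsto_of_tendsto_of_tendsto_of_le_of_le tendsto_const_nhds h (fun _ => zero_le) hω

end LinftyCauchy

def WeaklySequentiallyComplete (X : Type*) [NormedAddCommGroup X] [NormedSpace ℝ X] : Prop :=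
  ∀ x : ℕ → X, (∀ φ : X →L[ℝ] ℝ, ∃ L : ℝ, Tendsto (fun n => φ (x n)) atTop (𝓝 L)) →
    ∃ y : X, ∀ φ : X →L[ℝ] ℝ, Tendsto (fun n => φ (x n)) atTop (𝓝 (φ y))

namespace WeaklySequentiallyComplete

variable {α X : Type*} [MeasurableSpace α] {μ : Measure α} [NormedAddCommGroup X]
  [NormedSpace ℝ X]

theorem exists_stronglyMeasurable_ae_weak_limit (hX : WeaklySequentiallyComplete X)
    {f : ℕ → α → X} (hf : ∀ n, StronglyMeasurable (f n))
    (hcau : ∀ᵐ ω ∂μ, ∀ φ : X →L[ℝ] ℝ, CauchySeq fun n => φ (f n ω)) :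
    ∃ g : α → X, StronglyMeasurable g ∧
      ∀ᵐ ω ∂μ, ∀ φ : X →L[ℝ] ℝ, Tendsto (fun n => φ (f n ω)) atTop (𝓝 (φ (g ω))) := by
  obtain ⟨B, hB_ae, hBm, hB⟩ := hcau.exists_measurable_mem
  choose! y hy using fun ω hω => hX _ fun φ => cauchySeq_tendsto_of_complete (hB ω hω φ)
  let W := (Submodule.span ℝ (⋃ n, range (f n))).topologicalClosure
  have hWsep : TopologicalSpace.IsSeparable (W : Set X) := by
    rw [Submodule.topologicalClosure_coe]
    exact ((TopologicalSpace.isSeparable_iUnion.2 fun n => (hf n).isSeparable_range).span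
      (R := ℝ)).closure
  have hfW : ∀ n ω, f n ω ∈ W := fun n ω => Submodule.le_topologicalClosure _
    (Submodule.subset_span (mem_iUnion.2 ⟨n, ω, rfl⟩))
  have hyW : ∀ ω ∈ B, y ω ∈ W := fun ω hω =>
    mem_of_forall_dual_tendsto W.convex (Submodule.isClosed_topologicalClosure _) (hfW · ω)
      (hy ω hω)
  refine ⟨B.indicator y,
    stronglyMeasurable_of_measurable_dual_comp (𝕜 := ℝ) (hWsep.mono ?_) fun φ => ?_, ?_⟩
  · rintro _ ⟨ω, rfl⟩
    by_cases hω : ω ∈ B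
    · simpa [hω] using hyW ω hω
    · simp [hω]
  · refine measurable_of_tendsto_metrizable (f := fun n => B.indicator fun ω => φ (f n ω))
      (fun n => ((φ.continuous.comp_stronglyMeasurable (hf n)).measurable.indicator hBm))
      (tendsto_pi_nhds.2 fun ω => ?_)
    by_cases hω : ω ∈ B
    · simpa [hω] using hy ω hω φ
    · simp [hω]
  · filter_upwards [hB_ae] with ω hω
    simpa [hω] using hy ω hω

theorem exists_scalar_linfty_limit (hX : WeaklySequentiallyComplete X) {f : ℕ → α → X}
    (hf : ∀ n, AEStronglyMeasurable (f n) μ)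
    (hcau : ∀ φ : X →L[ℝ] ℝ, LinftyCauchy μ fun n ω => φ (f n ω)) :
    ∃ g : α → X, AEStronglyMeasurable g μ ∧ ∀ φ : X →L[ℝ] ℝ,
      Tendsto (fun n => eLpNorm (fun ω => φ (f n ω) - φ (g ω)) ⊤ μ) atTop (𝓝 0) := by
  have hpt : ∀ᵐ ω ∂μ, ∀ n m, ∀ φ : X →L[ℝ] ℝ,
      ‖φ (f n ω) - φ (f m ω)‖ₑ ≤ eLpNorm (fun ω => φ (f n ω) - φ (f m ω)) ⊤ μ := by
    simp only [ae_all_iff, ← map_sub]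
    exact fun n m => ae_forall_dual_enorm_le_eLpNorm_top ((hf n).sub (hf m))
  have hmk : ∀ᵐ ω ∂μ, ∀ n, f n ω = (hf n).mk (f n) ω := ae_all_iff.2 fun n => (hf n).ae_eq_mk
  obtain ⟨g, hg, hlim⟩ := hX.exists_stronglyMeasurable_ae_weak_limit
    (fun n => (hf n).stronglyMeasurable_mk) (μ := μ) (by
      filter_upwards [hpt, hmk] with ω hω hωmk φ
      simpa only [← hωmk] using (hcau φ).cauchySeq fun n m => hω n m φ)
  refine ⟨g, hg.aestronglyMeasurable, fun φ => (hcau φ).tendsto_eLpNorm_top ?_⟩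
  filter_upwards [hlim, hmk] with ω hω hωmk
  simpa only [← hωmk] using hω φ

end WeaklySequentiallyComplete

theorem exists_dual_tendsto_of_tendsto_eLpNorm_top_const {α 𝕜 E : Type*} [MeasurableSpace α]
    {μ : Measure α} [RCLike 𝕜] [NormedAddCommGroup E] [NormedSpace 𝕜 E] (hμ : μ ≠ 0)
    {x : ℕ → E} {g : α → E} (hg : AEStronglyMeasurable g μ)
    (hlim : ∀ φ : StrongDual 𝕜 E,
      Tendsto (fun n => eLpNorm (fun ω => φ (x n) - φ (g ω)) ⊤ μ) atTop (𝓝 0)) :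
    ∃ y : E, ∀ φ : StrongDual 𝕜 E, Tendsto (fun n => φ (x n)) atTop (𝓝 (φ y)) := by
  have := ae_neBot.2 hμ
  have hpt (φ : StrongDual 𝕜 E) : ∀ᵐ ω ∂μ, Tendsto (fun n => φ (x n)) atTop (𝓝 (φ (g ω))) :=
    ae_tendsto_of_tendsto_eLpNorm_top (u := fun n _ => φ (x n)) (hlim φ)
  obtain ⟨t, ht, hgt⟩ := hg.isSeparable_ae_range
  obtain ⟨ω₀, hω₀⟩ := (ae_mem_essRange ht hgt).exists
  refine ⟨g ω₀, fun φ => ?_⟩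
  obtain ⟨ω₁, hω₁⟩ := (hpt φ).exists
  have hφ : φ (g ω₀) = φ (g ω₁) :=
    essRange_subset_of_ae_mem (F := {y | φ y = φ (g ω₁)})
      (isClosed_eq φ.continuous continuous_const)
      (by filter_upwards [hpt φ] with ω hω using tendsto_nhds_unique hω hω₁) hω₀
  rwa [hφ]

theorem stmt_17_general {X : Type*} [NormedAddCommGroup X] [NormedSpace ℝ X] :
    (∀ x : ℕ → X,
      (∀ φ : X →L[ℝ] ℝ, ∃ L : ℝ, Tendsto (fun n => φ (x n)) atTop (𝓝 L)) →
      ∃ y : X, ∀ φ : X →L[ℝ] ℝ, Tendsto (fun n => φ (x n)) atTop (𝓝 (φ y))) ↔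
    (∀ f : ℕ → ℝ → X, (∀ n, AEStronglyMeasurable (f n) μ01) →
      (∀ φ : X →L[ℝ] ℝ, ∀ ε : ℝ, 0 < ε → ∃ N : ℕ, ∀ n ≥ N, ∀ m ≥ N,
        eLpNorm (fun ω => φ (f n ω) - φ (f m ω)) ⊤ μ01 < ENNReal.ofReal ε) →
      ∃ g : ℝ → X, AEStronglyMeasurable g μ01 ∧ ScalarInLp ⊤ f g) := by
  have hμ : μ01 ≠ 0 := by simp [μ01, Measure.restrict_eq_zero, Real.volume_Icc]
  refine ⟨fun hX f hf hcau => WeaklySequentiallyComplete.exists_scalar_linfty_limit hX hf hcau,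
    fun h x hx => ?_⟩
  have hcau (φ : X →L[ℝ] ℝ) : LinftyCauchy μ01 fun n (_ : ℝ) => φ (x n) :=
    (hx φ).choose_spec.cauchySeq.linftyCauchy_const
  obtain ⟨g, hg, hlim⟩ := h (fun n _ => x n) (fun _ => aestronglyMeasurable_const) hcau
  exact exists_dual_tendsto_of_tendsto_eLpNorm_top_const hμ hg hlim

theorem stmt_17 {X : Type*} [NormedAddCommGroup X] [NormedSpace ℝ X] [CompleteSpace X] :
    (∀ x : ℕ → X,
      (∀ φ : X →L[ℝ] ℝ, ∃ L : ℝ, Tendsto (fun n => φ (x n)) atTop (𝓝 L)) →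
      ∃ y : X, ∀ φ : X →L[ℝ] ℝ, Tendsto (fun n => φ (x n)) atTop (𝓝 (φ y))) ↔
    (∀ f : ℕ → ℝ → X, (∀ n, AEStronglyMeasurable (f n) μ01) →
      (∀ φ : X →L[ℝ] ℝ, ∀ ε : ℝ, 0 < ε → ∃ N : ℕ, ∀ n ≥ N, ∀ m ≥ N,
        eLpNorm (fun ω => φ (f n ω) - φ (f m ω)) ⊤ μ01 < ENNReal.ofReal ε) →
      ∃ g : ℝ → X, AEStronglyMeasurable g μ01 ∧ ScalarInLp ⊤ f g) :=
  stmt_17_general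
end
end

section
/- Let X be a reflexive real Banach space (i.e., the canonical embedding of X into its double dual X** is surjective). Then every sequence (f_n) in L₀(X) that is pointwise bounded a.e. (sup_n ‖f_n(ω)‖ < ∞ for μ-a.e. ω) and scalarly Cauchy in measure converges scalarly in measure to some f ∈ L₀(X). -/
open MeasureTheory Filter Topology ENNReal Set

noncomputable section

/-!
Let `Y` be the closed span of the (essentially separable) ranges of the `f n`, and `D m` a
sequence of functionals of norm at most one that norms `Y`. By Borel–Cantelli and a diagonal
argument, scalar Cauchyness in measure gives one subsequence along which every `D m ∘ f n`
converges almost everywhere. At such a point the subsequence is bounded, so by reflexivity it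
has a weak limit along every ultrafilter; these limits lie in `Y` and agree on the `D m`, which
separate the points of `Y`, so the subsequence converges weakly. The weak limit `g` is strongly
measurable by Pettis' theorem, the subsequence converges to `g` scalarly a.e., hence in measure,
and the Cauchy condition passes this on to the whole sequence.
-/

open TopologicalSpace

section WeakConvergence

variable {X : Type*} [NormedAddCommGroup X] [NormedSpace ℝ X] {ι : Type*}

def WeakTendsto (x : ι → X) (l : Filter ι) (z : X) : Prop :=
  ∀ φ : StrongDual ℝ X, Tendsto (fun i => φ (x i)) l (𝓝 (φ z))

theorem Convex.mem_of_weakTendsto {s : Set X} (hs : Convex ℝ s) (hsc : IsClosed s)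
    {l : Filter ι} [l.NeBot] {x : ι → X} {z : X} (hx : ∀ᶠ i in l, x i ∈ s)
    (hxz : WeakTendsto x l z) : z ∈ s := by
  by_contra hz
  obtain ⟨ψ, u, hψs, hψz⟩ := geometric_hahn_banach_closed_point hs hsc hz
  have : ψ z ≤ u := le_of_tendsto (hxz ψ) (hx.mono fun i hi => (hψs _ hi).le)
  linarith

theorem exists_weakTendsto_ultrafilter_of_bounded
    (hrefl : Function.Surjective (NormedSpace.inclusionInDoubleDual ℝ X))
    (U : Ultrafilter ι) {x : ι → X} {M : ℝ} (hM : ∀ i, ‖x i‖ ≤ M) :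
    ∃ z, WeakTendsto x U z := by
  have hlim : ∀ φ : StrongDual ℝ X,
      ∃ c, ‖c‖ ≤ M * ‖φ‖ ∧ Tendsto (fun i => φ (x i)) U (𝓝 c) := by
    intro φ
    have hball : ∀ i, φ (x i) ∈ Metric.closedBall 0 (M * ‖φ‖) := fun i => by
      rw [mem_closedBall_zero_iff, mul_comm]
      exact φ.le_of_opNorm_le_of_le le_rfl (hM i)
    obtain ⟨c, hc, hUc⟩ := (isCompact_closedBall (0 : ℝ) _).ultrafilter_le_nhds
      (U.map fun i => φ (x i)) (le_principal_iff.2 (Filter.mem_map.2 (Eventually.of_forall hball)))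
    exact ⟨c, mem_closedBall_zero_iff.1 hc, hUc⟩
  choose c hcM hc using hlim
  -- `c` is a bounded linear functional on the dual, i.e. a point of the bidual
  let F : StrongDual ℝ X →ₗ[ℝ] ℝ :=
    { toFun := c
      map_add' := fun φ ψ => tendsto_nhds_unique (hc (φ + ψ)) ((hc φ).add (hc ψ))
      map_smul' := fun a φ => tendsto_nhds_unique (hc (a • φ)) ((hc φ).const_mul a) }
  obtain ⟨z, hz⟩ := hrefl (F.mkContinuous M hcM)
  refine ⟨z, fun φ => ?_⟩
  rw [show φ z = c φ from DFunLike.congr_fun hz φ]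
  exact hc φ

theorem exists_weakTendsto_of_bounded_of_separating
    (hrefl : Function.Surjective (NormedSpace.inclusionInDoubleDual ℝ X))
    {Y : Submodule ℝ X} (hY : IsClosed (Y : Set X))
    {κ : Type*} {D : κ → StrongDual ℝ X} (hD : ∀ y ∈ Y, (∀ m, D m y = 0) → y = 0)
    {l : Filter ι} [l.NeBot] {x : ι → X} (hxY : ∀ i, x i ∈ Y) {M : ℝ} (hM : ∀ i, ‖x i‖ ≤ M)
    (hconv : ∀ m, ∃ c, Tendsto (fun i => D m (x i)) l (𝓝 c)) :
    ∃ z, WeakTendsto x l z := by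
  have hlim : ∀ U : Ultrafilter ι, ↑U ≤ l → ∃ z ∈ Y, WeakTendsto x U z := fun U _ =>
    let ⟨z, hz⟩ := exists_weakTendsto_ultrafilter_of_bounded hrefl U hM
    ⟨z, Y.convex.mem_of_weakTendsto hY (Eventually.of_forall hxY) hz, hz⟩
  obtain ⟨z, hzY, hz⟩ := hlim (Ultrafilter.of l) (Ultrafilter.of_le l)
  -- all ultrafilter limits agree on `D`, where they equal the limit along `l`
  have huniq : ∀ U : Ultrafilter ι, ↑U ≤ l → ∀ z' ∈ Y, WeakTendsto x U z' → z' = z := by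
    intro U hU z' hz'Y hz'
    refine sub_eq_zero.1 (hD _ (Y.sub_mem hz'Y hzY) fun m => ?_)
    obtain ⟨c, hc⟩ := hconv m
    rw [map_sub, tendsto_nhds_unique (hz' (D m)) (hc.mono_left hU),
      tendsto_nhds_unique (hz (D m)) (hc.mono_left (Ultrafilter.of_le l)), sub_self]
  refine ⟨z, fun φ => (tendsto_iff_ultrafilter _ _ _).2 fun U hU => ?_⟩
  obtain ⟨z', hz'Y, hz'⟩ := hlim U hU
  rw [← huniq U hU z' hz'Y hz']
  exact hz' φ

end WeakConvergence

section Pettis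

variable {X : Type*} [NormedAddCommGroup X] [NormedSpace ℝ X]

theorem norm_eq_iSup_of_mem_closure_range {u : ℕ → X} {D : ℕ → StrongDual ℝ X}
    (hD : ∀ m, ‖D m‖ ≤ 1) (hDu : ∀ m, D m (u m) = ‖u m‖) {y : X}
    (hy : y ∈ closure (range u)) : ‖y‖ = ⨆ m, D m y := by
  have hDle : ∀ m v, |D m v| ≤ ‖v‖ := fun m v =>
    ((D m).le_of_opNorm_le (hD m) v).trans_eq (one_mul _)
  have hle : ∀ m, D m y ≤ ‖y‖ := fun m => (le_abs_self _).trans (hDle m y)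
  refine le_antisymm (le_of_forall_pos_le_add fun ε hε => ?_) (ciSup_le hle)
  obtain ⟨_, ⟨m, rfl⟩, hm⟩ := Metric.mem_closure_iff.1 hy (ε / 2) (half_pos hε)
  rw [dist_eq_norm] at hm
  have hDy : D m y = ‖u m‖ + D m (y - u m) := by rw [map_sub, hDu]; ring
  have h1 := abs_le.1 (hDle m (y - u m))
  have h2 := norm_sub_norm_le y (u m)
  calc ‖y‖ ≤ D m y + ε := by linarith
    _ ≤ (⨆ m, D m y) + ε := by gcongr; exact le_ciSup ⟨‖y‖, forall_mem_range.2 hle⟩ m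

theorem TopologicalSpace.IsSeparable.exists_norm_eq_iSup {s : Set X} (hs : IsSeparable s) :
    ∃ D : ℕ → StrongDual ℝ X, ∀ y ∈ s, ‖y‖ = ⨆ m, D m y := by
  obtain ⟨t, htc, hst⟩ := hs
  obtain ⟨u, htu⟩ := countable_iff_exists_subset_range.1 htc
  choose D hD hDu using fun m => exists_dual_vector'' ℝ (u m)
  exact ⟨D, fun y hy => norm_eq_iSup_of_mem_closure_range hD hDu (closure_mono htu (hst hy))⟩

theorem stronglyMeasurable_of_measurable_dist {α E : Type*} [MeasurableSpace α]
    [PseudoMetricSpace E] {g : α → E} {u : ℕ → E} (hg : ∀ a, g a ∈ closure (range u))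
    (h : ∀ m, Measurable fun a => dist (g a) (u m)) : StronglyMeasurable g := by
  classical
  have hex : ∀ (k : ℕ) a, ∃ m, dist (g a) (u m) < 1 / (k + 1) := fun k a => by
    obtain ⟨_, ⟨m, rfl⟩, hm⟩ := Metric.mem_closure_iff.1 (hg a) _ Nat.one_div_pos_of_nat
    exact ⟨m, hm⟩
  refine stronglyMeasurable_of_tendsto atTop (f := fun k a => u (Nat.find (hex k a)))
    (fun k => StronglyMeasurable.of_discrete.comp_measurable
      (measurable_find _ fun m => measurableSet_lt (h m) measurable_const)) ?_
  refine tendsto_pi_nhds.2 fun a => tendsto_iff_dist_tendsto_zero.2 ?_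
  refine squeeze_zero (fun k => dist_nonneg) (fun k => ?_) tendsto_one_div_add_atTop_nhds_zero_nat
  rw [dist_comm]
  exact (Nat.find_spec (hex k a)).le

theorem stronglyMeasurable_of_measurable_dual {α : Type*} [MeasurableSpace α] {g : α → X}
    {s : Set X} (hs : IsSeparable s) (hgs : ∀ a, g a ∈ s)
    (hg : ∀ φ : StrongDual ℝ X, Measurable fun a => φ (g a)) : StronglyMeasurable g := by
  obtain ⟨t, htc, hst⟩ := id hs
  obtain ⟨u, htu⟩ := countable_iff_exists_subset_range.1 htc
  obtain ⟨D, hD⟩ := ((hs.union (countable_range u).isSeparable).span (R := ℝ)).exists_norm_eq_iSup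
  refine stronglyMeasurable_of_measurable_dist (u := u)
    (fun a => closure_mono htu (hst (hgs a))) fun m => ?_
  have hdist : (fun a => dist (g a) (u m)) = fun a => ⨆ k, (D k (g a) - D k (u m)) := by
    funext a
    rw [dist_eq_norm, hD _ (Submodule.sub_mem _ (Submodule.subset_span (Or.inl (hgs a)))
      (Submodule.subset_span (Or.inr ⟨m, rfl⟩)))]
    simp only [map_sub]
  rw [hdist]
  exact Measurable.iSup fun k => (hg (D k)).sub_const _

end Pettis

section CauchyInMeasure

variable {α E : Type*} [MeasurableSpace α] [PseudoMetricSpace E] {μ : Measure α}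

def CauchyInMeasure (μ : Measure α) (u : ℕ → α → E) : Prop :=
  ∀ ε : ℝ, 0 < ε → ∃ N : ℕ, ∀ n ≥ N, ∀ m ≥ N,
    μ {a | ε ≤ dist (u n a) (u m a)} < ENNReal.ofReal ε

theorem measure_le_dist_triangle {f g h : α → E} {ε ε₁ ε₂ : ℝ} (hε : ε₁ + ε₂ ≤ ε) :
    μ {a | ε ≤ dist (f a) (h a)} ≤
      μ {a | ε₁ ≤ dist (f a) (g a)} + μ {a | ε₂ ≤ dist (g a) (h a)} := by
  refine (measure_mono fun a (ha : ε ≤ dist (f a) (h a)) => ?_).trans (measure_union_le _ _)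
  by_contra hnot
  simp only [mem_union, mem_ofPred_eq, not_or, not_le] at hnot
  linarith [dist_triangle (f a) (g a) (h a)]

theorem ae_cauchySeq_of_measure_lt_geometric {v : ℕ → α → E}
    (h : ∀ᶠ j in atTop, μ {a | (1 / 2 : ℝ) ^ j ≤ dist (v j a) (v (j + 1) a)} <
      ENNReal.ofReal ((1 / 2) ^ j)) :
    ∀ᵐ a ∂μ, CauchySeq fun j => v j a := by
  obtain ⟨j₀, hj₀⟩ := eventually_atTop.1 h
  have hgeom : Summable fun j => (1 / 2 : ℝ) ^ (j + j₀) :=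
    (summable_nat_add_iff j₀).2 summable_geometric_two
  have hsum : ∑' j, μ {a | (1 / 2 : ℝ) ^ (j + j₀) ≤ dist (v (j + j₀) a) (v (j + j₀ + 1) a)}
      ≠ ∞ := by
    refine ne_top_of_le_ne_top ?_ (ENNReal.tsum_le_tsum fun j => (hj₀ (j + j₀) le_add_self).le)
    rw [← ENNReal.ofReal_tsum_of_nonneg (fun j => by positivity) hgeom]
    exact ENNReal.ofReal_ne_top
  filter_upwards [ae_eventually_notMem hsum] with a ha
  rw [← cauchySeq_shift j₀]
  refine cauchySeq_of_summable_dist (hgeom.of_norm_bounded_eventually_nat ?_)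
  filter_upwards [ha] with j hj
  simp only [not_le] at hj
  rw [Real.norm_of_nonneg dist_nonneg, Nat.succ_add]
  exact hj.le

theorem exists_subseq_forall_ae_cauchySeq {u : ℕ → ℕ → α → E} (hu : ∀ m, CauchyInMeasure μ (u m)) :
    ∃ ns : ℕ → ℕ, StrictMono ns ∧ ∀ m, ∀ᵐ a ∂μ, CauchySeq fun j => u m (ns j) a := by
  have hev : ∀ j, ∀ᶠ k in atTop, ∀ m ∈ Finset.range (j + 1), ∀ n ≥ k, ∀ n' ≥ k,
      μ {a | (1 / 2 : ℝ) ^ j ≤ dist (u m n a) (u m n' a)} < ENNReal.ofReal ((1 / 2) ^ j) := by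
    refine fun j => (Filter.eventually_all_finset _).2 fun m _ => ?_
    obtain ⟨N, hN⟩ := hu m _ (by positivity : (0 : ℝ) < (1 / 2) ^ j)
    filter_upwards [eventually_ge_atTop N] with k hk n hn n' hn'
    exact hN n (hk.trans hn) n' (hk.trans hn')
  obtain ⟨ns, hns, hP⟩ := extraction_forall_of_eventually hev
  refine ⟨ns, hns, fun m => ae_cauchySeq_of_measure_lt_geometric ?_⟩
  filter_upwards [eventually_ge_atTop m] with j hj
  exact hP j m (Finset.mem_range_succ_iff.2 hj) _ le_rfl _ (hns.monotone (Nat.le_succ j))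

theorem CauchyInMeasure.tendstoInMeasure_of_subseq {u : ℕ → α → E} {g : α → E}
    (hu : CauchyInMeasure μ u) {ns : ℕ → ℕ} (hns : StrictMono ns)
    (hsub : TendstoInMeasure μ (fun j => u (ns j)) atTop g) : TendstoInMeasure μ u atTop g := by
  rw [tendstoInMeasure_iff_dist] at hsub ⊢
  refine fun ε hε => ENNReal.tendsto_nhds_zero.2 fun δ hδ => ?_
  obtain ⟨r, -, hr0, hrδ⟩ := ENNReal.lt_iff_exists_real_btwn.1 hδ
  have hr : 0 < r := ENNReal.ofReal_pos.1 hr0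
  obtain ⟨N, hN⟩ := hu (min (ε / 2) (r / 2)) (by positivity)
  obtain ⟨J, hJN, hJ⟩ := ((hns.tendsto_atTop.eventually_ge_atTop N).and
    (ENNReal.tendsto_nhds_zero.1 (hsub (ε / 2) (half_pos hε)) (ENNReal.ofReal (r / 2))
      (by positivity))).exists
  filter_upwards [eventually_ge_atTop N] with n hn
  calc μ {a | ε ≤ dist (u n a) (g a)}
      ≤ μ {a | min (ε / 2) (r / 2) ≤ dist (u n a) (u (ns J) a)} +
        μ {a | ε / 2 ≤ dist (u (ns J) a) (g a)} :=
        measure_le_dist_triangle (by linarith [min_le_left (ε / 2) (r / 2)])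
    _ ≤ ENNReal.ofReal (r / 2) + ENNReal.ofReal (r / 2) :=
        add_le_add ((hN n hn _ hJN).le.trans (ENNReal.ofReal_le_ofReal (min_le_right _ _))) hJ
    _ ≤ δ := by rw [← ENNReal.ofReal_add (by positivity) (by positivity), add_halves]; exact hrδ.le

end CauchyInMeasure

section MeasurableWeakLimit

variable {X : Type*} [NormedAddCommGroup X] [NormedSpace ℝ X]
  {α : Type*} [MeasurableSpace α] {μ : Measure α}

theorem exists_stronglyMeasurable_ae_weakTendsto_of_stronglyMeasurable {f : ℕ → α → X}
    (hf : ∀ n, StronglyMeasurable (f n))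
    (h : ∀ᵐ a ∂μ, ∃ z, WeakTendsto (fun n => f n a) atTop z) :
    ∃ g : α → X, StronglyMeasurable g ∧ ∀ᵐ a ∂μ, WeakTendsto (fun n => f n a) atTop (g a) := by
  classical
  set Y := (Submodule.span ℝ (⋃ n, range (f n))).topologicalClosure
  have hYsep : IsSeparable (Y : Set X) :=
    ((IsSeparable.iUnion fun n => (hf n).isSeparable_range).span (R := ℝ)).closure
  have hfY : ∀ n a, f n a ∈ Y := fun n a =>
    Submodule.le_topologicalClosure _ (Submodule.subset_span (mem_iUnion.2 ⟨n, mem_range_self a⟩))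
  obtain ⟨N, hNsub, hNm, hN0⟩ := exists_measurable_superset_of_null (ae_iff.1 h)
  have hlim : ∀ a ∉ N, ∃ z, WeakTendsto (fun n => f n a) atTop z := fun a ha =>
    not_not.1 fun hna => ha (hNsub hna)
  let g : α → X := fun a => if ha : a ∈ N then 0 else (hlim a ha).choose
  have hg : ∀ a ∉ N, WeakTendsto (fun n => f n a) atTop (g a) := fun a ha => by
    simpa only [g, dif_neg ha] using (hlim a ha).choose_spec
  have hgY : ∀ a, g a ∈ Y := fun a => by
    by_cases ha : a ∈ N
    · simp only [g, dif_pos ha, Y.zero_mem]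
    · exact Y.convex.mem_of_weakTendsto (Submodule.isClosed_topologicalClosure _)
        (Eventually.of_forall (hfY · a)) (hg a ha)
  refine ⟨g, stronglyMeasurable_of_measurable_dual hYsep hgY fun φ => ?_,
    (measure_eq_zero_iff_ae_notMem.1 hN0).mono hg⟩
  refine measurable_of_tendsto_metrizable (f := fun n a => if a ∈ N then 0 else φ (f n a))
    (fun n => Measurable.ite hNm measurable_const
      (φ.continuous.comp_stronglyMeasurable (hf n)).measurable)
    (tendsto_pi_nhds.2 fun a => ?_)
  by_cases ha : a ∈ N
  · simpa only [g, if_pos ha, dif_pos ha, map_zero] using tendsto_const_nhds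
  · simpa only [if_neg ha] using hg a ha φ

theorem exists_stronglyMeasurable_ae_weakTendsto {f : ℕ → α → X}
    (hf : ∀ n, AEStronglyMeasurable (f n) μ)
    (h : ∀ᵐ a ∂μ, ∃ z, WeakTendsto (fun n => f n a) atTop z) :
    ∃ g : α → X, StronglyMeasurable g ∧ ∀ᵐ a ∂μ, WeakTendsto (fun n => f n a) atTop (g a) := by
  have hmk : ∀ᵐ a ∂μ, ∀ n, f n a = (hf n).mk (f n) a := ae_all_iff.2 fun n => (hf n).ae_eq_mk
  obtain ⟨g, hg, hfg⟩ := exists_stronglyMeasurable_ae_weakTendsto_of_stronglyMeasurable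
    (fun n => (hf n).stronglyMeasurable_mk) (μ := μ)
    (by filter_upwards [h, hmk] with a ha hma; simpa only [← hma] using ha)
  exact ⟨g, hg, by filter_upwards [hfg, hmk] with a ha hma; simpa only [hma] using ha⟩

theorem exists_subseq_ae_weakTendsto
    (hrefl : Function.Surjective (NormedSpace.inclusionInDoubleDual ℝ X)) {f : ℕ → α → X}
    (hf : ∀ n, AEStronglyMeasurable (f n) μ)
    (hbdd : ∀ᵐ a ∂μ, BddAbove (range fun n => ‖f n a‖))
    (hc : ∀ φ : StrongDual ℝ X, CauchyInMeasure μ fun n a => φ (f n a)) :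
    ∃ ns : ℕ → ℕ, StrictMono ns ∧ ∀ᵐ a ∂μ, ∃ z, WeakTendsto (fun j => f (ns j) a) atTop z := by
  choose t ht hft using fun n => (hf n).isSeparable_ae_range
  set Y := (Submodule.span ℝ (⋃ n, t n)).topologicalClosure
  have hfY : ∀ᵐ a ∂μ, ∀ n, f n a ∈ Y := ae_all_iff.2 fun n => (hft n).mono fun a ha =>
    Submodule.le_topologicalClosure _ (Submodule.subset_span (mem_iUnion.2 ⟨n, ha⟩))
  obtain ⟨D, hD⟩ := ((IsSeparable.iUnion ht).span (R := ℝ)).closure.exists_norm_eq_iSup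
  have hDsep : ∀ y ∈ Y, (∀ m, D m y = 0) → y = 0 := fun y hy h0 =>
    norm_eq_zero.1 (by rw [hD y hy]; simp [h0])
  obtain ⟨ns, hns, hcauchy⟩ := exists_subseq_forall_ae_cauchySeq fun m => hc (D m)
  refine ⟨ns, hns, ?_⟩
  filter_upwards [hbdd, hfY, ae_all_iff.2 hcauchy] with a ⟨M, hM⟩ hfaY hDa
  exact exists_weakTendsto_of_bounded_of_separating hrefl
    (Submodule.isClosed_topologicalClosure _) hDsep (fun j => hfaY (ns j))
    (fun j => hM (mem_range_self (ns j))) fun m => cauchySeq_tendsto_of_complete (hDa m)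

end MeasurableWeakLimit

instance : IsFiniteMeasure μ01 :=
  inferInstanceAs (IsFiniteMeasure (volume.restrict (Icc (0 : ℝ) 1)))

theorem stmt_18_general {X : Type*} [NormedAddCommGroup X] [NormedSpace ℝ X]
    (hrefl : Function.Surjective (NormedSpace.inclusionInDoubleDual ℝ X))
    (f : ℕ → ℝ → X) (hf : ∀ n, AEStronglyMeasurable (f n) μ01)
    (hbdd : PtwiseBddAE f) (hc : ScalarCauchyInMeasure f) :
    ∃ g : ℝ → X, AEStronglyMeasurable g μ01 ∧ ScalarInMeasure f g := by
  obtain ⟨ns, hns, hweak⟩ := exists_subseq_ae_weakTendsto hrefl hf hbdd hc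
  obtain ⟨g, hg, hfg⟩ := exists_stronglyMeasurable_ae_weakTendsto (fun j => hf (ns j)) hweak
  refine ⟨g, hg.aestronglyMeasurable,
    fun φ => CauchyInMeasure.tendstoInMeasure_of_subseq (hc φ) hns ?_⟩
  exact tendstoInMeasure_of_tendsto_ae
    (fun j => φ.continuous.comp_aestronglyMeasurable (hf (ns j))) (hfg.mono fun a ha => ha φ)

theorem stmt_18 {X : Type*} [NormedAddCommGroup X] [NormedSpace ℝ X] [CompleteSpace X]
    (hrefl : Function.Surjective (NormedSpace.inclusionInDoubleDual ℝ X))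
    (f : ℕ → ℝ → X) (hf : ∀ n, AEStronglyMeasurable (f n) μ01)
    (hbdd : PtwiseBddAE f) (hc : ScalarCauchyInMeasure f) :
    ∃ g : ℝ → X, AEStronglyMeasurable g μ01 ∧ ScalarInMeasure f g :=
  stmt_18_general hrefl f hf hbdd hc
end
end
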